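/- arXiv:1410.0131 — 9 statements merged into one kernel-verified Lean document; each statement's English description precedes it below -/
import Mathlib

section
/- For all nonnegative integers n and ℓ, the sum over k from 0 to n of C(2n, n-k)·C(2ℓ, ℓ-k)·(2k+1)²/((n+k+1)(ℓ+k+1)) equals C(2n+2ℓ, n+ℓ)/(n+ℓ+1), as an identity of rational numbers. -/
/-- Binomial coefficient with integer lower index: `C(a,b) = 0` when `b < 0` or `b > a`. -/
def intChoose (a : ℕ) (b : ℤ) : ℕ := if b < 0 then 0 else a.choose b.toNat

/-- Auxiliary: `A m k = C(2m, m+k)`. -/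
def scA (m k : ℕ) : ℕ := (2 * m).choose (m + k)

lemma scA_zero (m k : ℕ) (h : m < k) : scA m k = 0 :=
  Nat.choose_eq_zero_of_lt (by omega)

lemma intChoose_eq_scA (m k : ℕ) : intChoose (2 * m) ((m : ℤ) - k) = scA m k := by
  unfold intChoose scA
  rcases le_or_gt k m with h | h
  · rw [if_neg (by omega)]
    have ht : ((m : ℤ) - k).toNat = m - k := by omega
    rw [ht, show m - k = 2 * m - (m + k) by omega]
    exact Nat.choose_symm (by omega)
  · rw [if_pos (by omega)]
    exact (Nat.choose_eq_zero_of_lt (by omega)).symm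

lemma scA_step (m k : ℕ) :
    (scA m (k + 1) : ℚ) * ((m : ℚ) + k + 1) = (scA m k : ℚ) * ((m : ℚ) - k) := by
  rcases le_or_gt k m with h | h
  · have h2 := Nat.choose_succ_right_eq (2 * m) (m + k)
    have h3 : 2 * m - (m + k) = m - k := by omega
    rw [h3] at h2
    have h4 : ((2 * m).choose (m + k + 1) : ℚ) * ((m : ℚ) + k + 1)
        = ((2 * m).choose (m + k) : ℚ) * (((m - k : ℕ) : ℚ)) := by
      exact_mod_cast h2
    unfold scA
    rw [show m + (k + 1) = m + k + 1 by ring, h4, Nat.cast_sub h]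
  · rw [scA_zero m k h, scA_zero m (k + 1) (by omega)]
    push_cast
    ring

lemma scA_term (m k : ℕ) :
    (scA m k : ℚ) * (2 * k + 1) / ((m : ℚ) + k + 1)
      = (scA m k : ℚ) - (scA m (k + 1) : ℚ) := by
  have h := scA_step m k
  have hne : ((m : ℚ) + k + 1) ≠ 0 := by positivity
  field_simp
  linear_combination h

lemma sum_range_add' {M : Type*} [AddCommMonoid M] (f : ℕ → M) (a b : ℕ) :
    ∑ i ∈ Finset.range (a + b), f i
      = ∑ i ∈ Finset.range a, f i + ∑ j ∈ Finset.range b, f (a + j) := by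
  induction b with
  | zero => simp
  | succ b ih =>
      rw [show a + (b + 1) = (a + b) + 1 by ring, Finset.sum_range_succ, ih,
        Finset.sum_range_succ, add_assoc]

/-- Vandermonde sum split: `C(2n+2l, n+l) = ∑ (a_k b_k + a_{k+1} b_{k+1})`. -/
lemma vandermonde_even (n l : ℕ) :
    (2 * n + 2 * l).choose (n + l)
      = ∑ k ∈ Finset.range (n + l + 1),
          (scA n k * scA l k + scA n (k + 1) * scA l (k + 1)) := by
  rw [Nat.add_choose_eq, Finset.Nat.sum_antidiagonal_eq_sum_range_succ_mk]
  have hpr : ∀ k : ℕ, (2 * n).choose (k, n + l - k).1 * (2 * l).choose (k, n + l - k).2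
      = (2 * n).choose k * (2 * l).choose (n + l - k) := fun k => rfl
  simp only [hpr]
  rw [show (n + l).succ = (n + 1) + l from by omega,
    sum_range_add' (fun i => (2 * n).choose i * (2 * l).choose (n + l - i))]
  have h1 : ∑ i ∈ Finset.range (n + 1),
      (2 * n).choose i * (2 * l).choose (n + l - i)
      = ∑ j ∈ Finset.range (n + 1), scA n j * scA l j := by
    rw [← Finset.sum_range_reflect]
    apply Finset.sum_congr rfl
    intro j hj
    simp only [Finset.mem_range] at hj
    have hjn : j ≤ n := by omega
    have e1 : n + 1 - 1 - j = n - j := by omega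
    have e2 : n + l - (n - j) = l + j := by omega
    rw [e1, e2]
    unfold scA
    rw [show n - j = 2 * n - (n + j) by omega, Nat.choose_symm (by omega)]
  have h2 : ∑ j ∈ Finset.range l,
      (2 * n).choose ((n + 1) + j) * (2 * l).choose (n + l - ((n + 1) + j))
      = ∑ j ∈ Finset.range l, scA n (j + 1) * scA l (j + 1) := by
    apply Finset.sum_congr rfl
    intro j hj
    simp only [Finset.mem_range] at hj
    have e1 : n + l - ((n + 1) + j) = l - (j + 1) := by omega
    rw [e1]
    unfold scA
    rw [show n + 1 + j = n + (j + 1) by ring,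
      show l - (j + 1) = 2 * l - (l + (j + 1)) by omega, Nat.choose_symm (by omega)]
  rw [h1, h2, Finset.sum_add_distrib]
  congr 1
  · apply Finset.sum_subset (Finset.range_subset_range.mpr (by omega))
    intro k _ hk
    simp only [Finset.mem_range, not_lt] at hk
    rw [scA_zero n k (by omega), zero_mul]
  · apply Finset.sum_subset (Finset.range_subset_range.mpr (by omega))
    intro k _ hk
    simp only [Finset.mem_range, not_lt] at hk
    rw [scA_zero l (k + 1) (by omega), mul_zero]

/-- Vandermonde sum split: `C(2n+2l, n+l+1) = ∑ (a_k b_{k+1} + a_{k+1} b_k)`. -/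
lemma vandermonde_odd (n l : ℕ) :
    (2 * n + 2 * l).choose (n + l + 1)
      = ∑ k ∈ Finset.range (n + l + 1),
          (scA n k * scA l (k + 1) + scA n (k + 1) * scA l k) := by
  rw [Nat.add_choose_eq, Finset.Nat.sum_antidiagonal_eq_sum_range_succ_mk]
  have hpr : ∀ k : ℕ, (2 * n).choose (k, n + l + 1 - k).1 * (2 * l).choose (k, n + l + 1 - k).2
      = (2 * n).choose k * (2 * l).choose (n + l + 1 - k) := fun k => rfl
  simp only [hpr]
  rw [show (n + l + 1).succ = (n + 1) + (l + 1) from by omega,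
    sum_range_add' (fun i => (2 * n).choose i * (2 * l).choose (n + l + 1 - i))]
  have h1 : ∑ i ∈ Finset.range (n + 1),
      (2 * n).choose i * (2 * l).choose (n + l + 1 - i)
      = ∑ j ∈ Finset.range (n + 1), scA n j * scA l (j + 1) := by
    rw [← Finset.sum_range_reflect]
    apply Finset.sum_congr rfl
    intro j hj
    simp only [Finset.mem_range] at hj
    have hjn : j ≤ n := by omega
    have e1 : n + 1 - 1 - j = n - j := by omega
    have e2 : n + l + 1 - (n - j) = l + (j + 1) := by omega
    rw [e1, e2]
    unfold scA
    rw [show n - j = 2 * n - (n + j) by omega, Nat.choose_symm (by omega)]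
  have h2 : ∑ j ∈ Finset.range (l + 1),
      (2 * n).choose ((n + 1) + j) * (2 * l).choose (n + l + 1 - ((n + 1) + j))
      = ∑ j ∈ Finset.range (l + 1), scA n (j + 1) * scA l j := by
    apply Finset.sum_congr rfl
    intro j hj
    simp only [Finset.mem_range] at hj
    have e1 : n + l + 1 - ((n + 1) + j) = l - j := by omega
    rw [e1]
    unfold scA
    rw [show n + 1 + j = n + (j + 1) by ring,
      show l - j = 2 * l - (l + j) by omega, Nat.choose_symm (by omega)]
  rw [h1, h2]
  rw [Finset.sum_add_distrib]
  congr 1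
  · apply Finset.sum_subset (Finset.range_subset_range.mpr (by omega))
    intro k _ hk
    simp only [Finset.mem_range, not_lt] at hk
    rw [scA_zero n k (by omega), zero_mul]
  · apply Finset.sum_subset (Finset.range_subset_range.mpr (by omega))
    intro k _ hk
    simp only [Finset.mem_range, not_lt] at hk
    rw [scA_zero l k (by omega), mul_zero]

theorem super_catalan_stmt1 (n l : ℕ) :
    ∑ k ∈ Finset.range (n + 1),
        (intChoose (2 * n) ((n : ℤ) - k) : ℚ) * (intChoose (2 * l) ((l : ℤ) - k) : ℚ)
          * (2 * k + 1) ^ 2 / (((n : ℚ) + k + 1) * ((l : ℚ) + k + 1))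
      = ((2 * n + 2 * l).choose (n + l) : ℚ) / ((n : ℚ) + l + 1) := by
  have hstep1 : ∑ k ∈ Finset.range (n + 1),
        (intChoose (2 * n) ((n : ℤ) - k) : ℚ) * (intChoose (2 * l) ((l : ℤ) - k) : ℚ)
          * (2 * k + 1) ^ 2 / (((n : ℚ) + k + 1) * ((l : ℚ) + k + 1))
      = ∑ k ∈ Finset.range (n + 1),
          ((scA n k : ℚ) - (scA n (k + 1) : ℚ)) * ((scA l k : ℚ) - (scA l (k + 1) : ℚ)) := by
    apply Finset.sum_congr rfl
    intro k _
    rw [intChoose_eq_scA, intChoose_eq_scA, ← scA_term n k, ← scA_term l k]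
    have hn : ((n : ℚ) + k + 1) ≠ 0 := by positivity
    have hl : ((l : ℚ) + k + 1) ≠ 0 := by positivity
    field_simp
  rw [hstep1]
  have hstep2 : ∑ k ∈ Finset.range (n + 1),
          ((scA n k : ℚ) - (scA n (k + 1) : ℚ)) * ((scA l k : ℚ) - (scA l (k + 1) : ℚ))
      = ∑ k ∈ Finset.range (n + l + 1),
          ((scA n k : ℚ) - (scA n (k + 1) : ℚ)) * ((scA l k : ℚ) - (scA l (k + 1) : ℚ)) := by
    apply Finset.sum_subset (Finset.range_subset_range.mpr (by omega))
    intro k _ hk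
    simp only [Finset.mem_range, not_lt] at hk
    rw [scA_zero n k (by omega), scA_zero n (k + 1) (by omega)]
    norm_num
  rw [hstep2]
  have hstep3 : ∑ k ∈ Finset.range (n + l + 1),
          ((scA n k : ℚ) - (scA n (k + 1) : ℚ)) * ((scA l k : ℚ) - (scA l (k + 1) : ℚ))
      = ((2 * n + 2 * l).choose (n + l) : ℚ) - ((2 * n + 2 * l).choose (n + l + 1) : ℚ) := by
    have he := vandermonde_even n l
    have ho := vandermonde_odd n l
    have he' : ((2 * n + 2 * l).choose (n + l) : ℚ)
        = ∑ k ∈ Finset.range (n + l + 1),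
            ((scA n k : ℚ) * (scA l k : ℚ) + (scA n (k + 1) : ℚ) * (scA l (k + 1) : ℚ)) := by
      rw [he]; push_cast; rfl
    have ho' : ((2 * n + 2 * l).choose (n + l + 1) : ℚ)
        = ∑ k ∈ Finset.range (n + l + 1),
            ((scA n k : ℚ) * (scA l (k + 1) : ℚ) + (scA n (k + 1) : ℚ) * (scA l k : ℚ)) := by
      rw [ho]; push_cast; rfl
    rw [he', ho', ← Finset.sum_sub_distrib]
    apply Finset.sum_congr rfl
    intro k _
    ring
  rw [hstep3]
  -- Finally: C(2m, m) - C(2m, m+1) = C(2m, m) / (m+1) with m = n + l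
  have hkey := scA_step (n + l) 0
  have h0 : scA (n + l) 0 = (2 * n + 2 * l).choose (n + l) := by
    unfold scA; rw [show 2 * (n + l) = 2 * n + 2 * l by ring, Nat.add_zero]
  have h1 : scA (n + l) 1 = (2 * n + 2 * l).choose (n + l + 1) := by
    unfold scA; rw [show 2 * (n + l) = 2 * n + 2 * l by ring]
  rw [h0, h1] at hkey
  have hne : ((n : ℚ) + l + 1) ≠ 0 := by positivity
  field_simp
  push_cast at hkey ⊢
  linear_combination (-1 : ℚ) * hkey
end

section
/- For every nonnegative integer n, the sum over k from 0 to n of (-1)^k·C(2n, n-k)·(2k+1)/(n+k+1) equals 1 if n=0 and 0 otherwise (as rational numbers). -/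
theorem super_catalan_stmt3 (n : ℕ) :
    ∑ k ∈ Finset.range (n + 1),
        (-1 : ℚ) ^ k * ((2 * n).choose (n - k) : ℚ) * (2 * (k : ℚ) + 1) / ((n : ℚ) + k + 1)
      = if n = 0 then 1 else 0 := by
  rcases Nat.eq_zero_or_pos n with h0 | hn
  · subst h0; norm_num
  · rw [if_neg hn.ne']
    set g : ℕ → ℚ := fun k =>
      (-1 : ℚ) ^ k * (2 * ((2 * n - 1).choose (n - k) : ℚ) - ((2 * n).choose (n - k) : ℚ))
      with hg
    have key : ∀ k < n,
        (-1 : ℚ) ^ k * ((2 * n).choose (n - k) : ℚ) * (2 * (k : ℚ) + 1) / ((n : ℚ) + k + 1)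
          = g k - g (k + 1) := by
      intro k hk
      have h1 : n - k - 1 + 1 = n - k := by omega
      have hr := Nat.choose_succ_right_eq (2 * n) (n - k - 1)
      rw [h1, show 2 * n - (n - k - 1) = n + k + 1 from by omega] at hr
      have hrq := congrArg (fun x : ℕ => (x : ℚ)) hr
      push_cast [Nat.cast_sub hk.le] at hrq
      have hp : (2 * n).choose (n - k)
          = (2 * n - 1).choose (n - k - 1) + (2 * n - 1).choose (n - k) := by
        have h := Nat.choose_succ_succ (2 * n - 1) (n - k - 1)
        simp only [Nat.succ_eq_add_one] at h
        rw [show 2 * n - 1 + 1 = 2 * n from by omega, h1] at h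
        exact h
      have hpq : ((2 * n).choose (n - k) : ℚ)
          = ((2 * n - 1).choose (n - k - 1) : ℚ) + ((2 * n - 1).choose (n - k) : ℚ) := by
        exact_mod_cast hp
      have hBB : ((2 * n).choose (n - k) : ℚ) * (2 * (k : ℚ) + 1)
          = (((2 * n).choose (n - k) : ℚ) - ((2 * n).choose (n - k - 1) : ℚ)) * ((n : ℚ) + k + 1) := by
        linear_combination -hrq
      have hnk : n - (k + 1) = n - k - 1 := by omega
      simp only [hg, hnk]
      have hden : (n : ℚ) + k + 1 ≠ 0 := by positivity
      rw [div_eq_iff hden]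
      linear_combination ((-1 : ℚ) ^ k) * hBB + (2 * (-1 : ℚ) ^ k * ((n : ℚ) + (k : ℚ) + 1)) * hpq
    rw [Finset.sum_range_succ,
      Finset.sum_congr rfl (fun k hk => key k (Finset.mem_range.mp hk)),
      Finset.sum_range_sub' g]
    have hg0 : g 0 = 0 := by
      obtain ⟨m, rfl⟩ := Nat.exists_eq_succ_of_ne_zero hn.ne'
      show (-1 : ℚ) ^ 0 * (2 * ((2 * (m + 1) - 1).choose (m + 1 - 0) : ℚ)
        - ((2 * (m + 1)).choose (m + 1 - 0) : ℚ)) = 0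
      rw [show 2 * (m + 1) - 1 = 2 * m + 1 from by omega, show m + 1 - 0 = m + 1 from rfl,
        show 2 * (m + 1) = 2 * m + 1 + 1 from by omega,
        Nat.choose_succ_succ (2 * m + 1) m, Nat.choose_symm_half]
      push_cast
      ring
    have hgn : g n = (-1 : ℚ) ^ n := by simp [hg]; norm_num
    have hlast : (-1 : ℚ) ^ n * ((2 * n).choose (n - n) : ℚ) * (2 * (n : ℚ) + 1) / ((n : ℚ) + n + 1)
        = (-1 : ℚ) ^ n := by
      have hden : (n : ℚ) + n + 1 ≠ 0 := by positivity
      rw [Nat.sub_self, Nat.choose_zero_right]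
      rw [div_eq_iff hden]
      push_cast
      ring
    rw [hg0, hgn, hlast]
    ring
end

section
/- Define the polynomials l_n(x,m,s) = ∑_{k=0}^{⌊n/2⌋} (n!/(k!·(n-2k)!)) · (1/∏_{j=1}^{k}(m+n-j)) · s^k · x^{n-2k} over the rationals, for m a positive integer. Then for all n ≥ 2, l_n(x,m,s) = x·l_{n-1}(x,m,s) + s·λ_{n-2}(m)·l_{n-2}(x,m,s), where λ_0(m) = 2/(m+1) and λ_j(m) = (j+1)(j+2m)/((j+m)(j+m+1)) for j > 0. -/
open Polynomial

/-- The polynomials `l_n(x,m,s)` of the paper. -/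
noncomputable def lpoly (m : ℕ) (s : ℚ) (n : ℕ) : Polynomial ℚ :=
  ∑ k ∈ Finset.range (n / 2 + 1),
    Polynomial.C ((n.factorial : ℚ) / ((k.factorial : ℚ) * ((n - 2 * k).factorial : ℚ))
        * (∏ j ∈ Finset.Icc 1 k, ((m : ℚ) + (n : ℚ) - (j : ℚ)))⁻¹ * s ^ k)
      * Polynomial.X ^ (n - 2 * k)

/-- The coefficients `λ_j(m)`. -/
def lamSC (m j : ℕ) : ℚ :=
  if j = 0 then 2 / ((m : ℚ) + 1)
  else ((j : ℚ) + 1) * ((j : ℚ) + 2 * m) / (((j : ℚ) + m) * ((j : ℚ) + m + 1))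

noncomputable def Pp (m n k : ℕ) : ℚ := ∏ j ∈ Finset.Icc 1 k, ((m : ℚ) + (n : ℚ) - (j : ℚ))

noncomputable def cc (m : ℕ) (s : ℚ) (n k : ℕ) : ℚ :=
  (n.factorial : ℚ) / ((k.factorial : ℚ) * ((n - 2 * k).factorial : ℚ)) * (Pp m n k)⁻¹ * s ^ k

lemma lpoly_eq (m : ℕ) (s : ℚ) (n : ℕ) :
    lpoly m s n = ∑ k ∈ Finset.range (n / 2 + 1),
      Polynomial.C (cc m s n k) * Polynomial.X ^ (n - 2 * k) := rfl

lemma Pp_range (m n k : ℕ) :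
    Pp m n k = ∏ i ∈ Finset.range k, ((m : ℚ) + n - 1 - i) := by
  induction k with
  | zero => simp [Pp]
  | succ k ih =>
    rw [Pp, Finset.prod_Icc_succ_top (by omega), ← Pp, ih, Finset.prod_range_succ]
    push_cast
    ring

lemma key0 (a : ℚ) (k : ℕ) :
    (∏ i ∈ Finset.range (k + 1), (a - i)) = a * ∏ i ∈ Finset.range k, (a - 1 - i) := by
  rw [Finset.prod_range_succ']
  simp only [Nat.cast_zero, sub_zero]
  rw [mul_comm]
  congr 1
  exact Finset.prod_congr rfl fun i _ => by push_cast; ring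

lemma key1 (a : ℚ) (k : ℕ) :
    (∏ i ∈ Finset.range k, (a - i)) * (a - k) = a * ∏ i ∈ Finset.range k, (a - 1 - i) := by
  rw [← key0, Finset.prod_range_succ]

lemma PA (m N k : ℕ) : Pp m (N + 2) (k + 1) = ((m : ℚ) + N + 1) * Pp m (N + 1) k := by
  rw [Pp_range, Pp_range]
  calc ∏ i ∈ Finset.range (k + 1), ((m : ℚ) + (N + 2 : ℕ) - 1 - i)
      = ∏ i ∈ Finset.range (k + 1), (((m : ℚ) + N + 1) - i) :=
        Finset.prod_congr rfl fun i _ => by push_cast; ring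
    _ = ((m : ℚ) + N + 1) * ∏ i ∈ Finset.range k, ((m : ℚ) + N + 1 - 1 - i) := key0 _ _
    _ = ((m : ℚ) + N + 1) * ∏ i ∈ Finset.range k, ((m : ℚ) + (N + 1 : ℕ) - 1 - i) := by
        congr 1
        exact Finset.prod_congr rfl fun i _ => by push_cast; ring

lemma PB (m N k : ℕ) : Pp m (N + 1) (k + 1) = ((m : ℚ) + N) * Pp m N k := by
  rw [Pp_range, Pp_range]
  calc ∏ i ∈ Finset.range (k + 1), ((m : ℚ) + (N + 1 : ℕ) - 1 - i)
      = ∏ i ∈ Finset.range (k + 1), (((m : ℚ) + N) - i) :=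
        Finset.prod_congr rfl fun i _ => by push_cast; ring
    _ = ((m : ℚ) + N) * ∏ i ∈ Finset.range k, ((m : ℚ) + N - 1 - i) := key0 _ _

lemma PC (m N k : ℕ) : Pp m (N + 1) k * ((m : ℚ) + N - k) = ((m : ℚ) + N) * Pp m N k := by
  rw [Pp_range, Pp_range]
  rw [show ∏ i ∈ Finset.range k, ((m : ℚ) + (N + 1 : ℕ) - 1 - i)
      = ∏ i ∈ Finset.range k, (((m : ℚ) + N) - i) from
    Finset.prod_congr rfl fun i _ => by push_cast; ring]
  exact key1 _ _

lemma Pp_pos (m n k : ℕ) (hm : 1 ≤ m) (hk : k ≤ n) : 0 < Pp m n k := by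
  rw [Pp]
  apply Finset.prod_pos
  intro j hj
  obtain ⟨hj1, hj2⟩ := Finset.mem_Icc.mp hj
  have h1 : (j : ℚ) ≤ n := by exact_mod_cast hj2.trans hk
  have h2 : (1 : ℚ) ≤ m := by exact_mod_cast hm
  linarith

lemma cc_zero (m : ℕ) (s : ℚ) (n : ℕ) : cc m s n 0 = 1 := by
  simp [cc, Pp, Nat.factorial_ne_zero,
    div_self (a := (n.factorial : ℚ)) (by exact_mod_cast n.factorial_ne_zero)]

lemma lamSC_eq (m : ℕ) (hm : 1 ≤ m) (j : ℕ) :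
    lamSC m j = ((j : ℚ) + 1) * ((j : ℚ) + 2 * m) / (((j : ℚ) + m) * ((j : ℚ) + m + 1)) := by
  rcases eq_or_ne j 0 with rfl | h
  · have hm' : (m : ℚ) ≠ 0 := Nat.cast_ne_zero.mpr (by omega)
    have hm1 : (m : ℚ) + 1 ≠ 0 := by positivity
    rw [lamSC]
    simp only [if_pos rfl, Nat.cast_zero, ↓reduceIte]
    field_simp
    ring
  · rw [lamSC, if_neg h]

lemma fact2 (M : ℕ) : ((M + 2).factorial : ℚ) = (M + 2) * (M + 1) * M.factorial := by
  rw [show M + 2 = M + 1 + 1 from rfl, Nat.factorial_succ, Nat.factorial_succ]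
  push_cast; ring

lemma fact1 (M : ℕ) : ((M + 1).factorial : ℚ) = (M + 1) * M.factorial := by
  rw [Nat.factorial_succ]; push_cast; ring

lemma E1 (m : ℕ) (hm : 1 ≤ m) (s : ℚ) (N k : ℕ) (h : 2 * k + 1 ≤ N) :
    cc m s (N + 2) (k + 1) = cc m s (N + 1) (k + 1) + s * lamSC m N * cc m s N k := by
  obtain ⟨e, rfl⟩ : ∃ e, N = 2 * k + 1 + e := ⟨N - (2 * k + 1), by omega⟩
  have hQ : (0 : ℚ) < Pp m (2 * k + 1 + e) k := Pp_pos m _ k hm (by omega)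
  have hcast : ((2 * k + 1 + e : ℕ) : ℚ) = 2 * k + 1 + e := by push_cast; ring
  have hmN : (0 : ℚ) < (m : ℚ) + (2 * k + 1 + e : ℕ) - k := by
    rw [hcast]
    have h2 : (1 : ℚ) ≤ m := by exact_mod_cast hm
    linarith
  rw [cc, cc, cc,
    show 2 * k + 1 + e + 2 - 2 * (k + 1) = e + 1 from by omega,
    show 2 * k + 1 + e + 1 - 2 * (k + 1) = e from by omega,
    show 2 * k + 1 + e - 2 * k = e + 1 from by omega,
    fact2, fact1, fact1, fact1, PA, PB, lamSC_eq m hm]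
  have hPC : Pp m (2 * k + 1 + e + 1) k
      = ((m : ℚ) + (2 * k + 1 + e : ℕ)) * Pp m (2 * k + 1 + e) k
        / ((m : ℚ) + (2 * k + 1 + e : ℕ) - k) := by
    rw [eq_div_iff hmN.ne']
    exact PC m _ k
  rw [hPC]
  have h1 : (k.factorial : ℚ) ≠ 0 := by exact_mod_cast k.factorial_ne_zero
  have h2 : (e.factorial : ℚ) ≠ 0 := by exact_mod_cast e.factorial_ne_zero
  have hm' : (1 : ℚ) ≤ m := by exact_mod_cast hm
  have h3 : ((m : ℚ) + (2 * k + 1 + e : ℕ)) ≠ 0 := by rw [hcast]; positivity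
  have h4 : ((m : ℚ) + (2 * k + 1 + e : ℕ) + 1) ≠ 0 := by rw [hcast]; positivity
  have h5 : (((2 * k + 1 + e : ℕ) : ℚ) + m) ≠ 0 := by rw [hcast]; positivity
  have h6 : (((2 * k + 1 + e : ℕ) : ℚ) + m + 1) ≠ 0 := by rw [hcast]; positivity
  rw [hcast] at *
  -- push_cast
  field_simp
  ring

lemma E2 (m : ℕ) (hm : 1 ≤ m) (s : ℚ) (t : ℕ) :
    cc m s (t + t + 2) (t + 1) = s * lamSC m (t + t) * cc m s (t + t) t := by
  have hQ : (0 : ℚ) < Pp m (t + t) t := Pp_pos m _ t hm (by omega)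
  have hcast : ((t + t : ℕ) : ℚ) = t + t := by push_cast; ring
  have hm' : (1 : ℚ) ≤ m := by exact_mod_cast hm
  have hmN : (0 : ℚ) < (m : ℚ) + (t + t : ℕ) - t := by rw [hcast]; linarith
  rw [cc, cc,
    show t + t + 2 - 2 * (t + 1) = 0 from by omega,
    show t + t - 2 * t = 0 from by omega,
    fact2, fact1, PA, lamSC_eq m hm]
  have hPC : Pp m (t + t + 1) t
      = ((m : ℚ) + (t + t : ℕ)) * Pp m (t + t) t / ((m : ℚ) + (t + t : ℕ) - t) := by
    rw [eq_div_iff hmN.ne']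
    exact PC m _ t
  rw [hPC]
  have h1 : (t.factorial : ℚ) ≠ 0 := by exact_mod_cast t.factorial_ne_zero
  have h3 : ((m : ℚ) + (t + t : ℕ)) ≠ 0 := by rw [hcast]; positivity
  have h5 : (((t + t : ℕ) : ℚ) + m) ≠ 0 := by rw [hcast]; positivity
  have h6 : (((t + t : ℕ) : ℚ) + m + 1) ≠ 0 := by rw [hcast]; positivity
  rw [hcast] at *
  -- push_cast
  field_simp
  ring

theorem super_catalan_stmt7 (m : ℕ) (hm : 1 ≤ m) (s : ℚ) (n : ℕ) (hn : 2 ≤ n) :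
    lpoly m s n
      = Polynomial.X * lpoly m s (n - 1)
        + Polynomial.C (s * lamSC m (n - 2)) * lpoly m s (n - 2) := by
  obtain ⟨N, rfl⟩ : ∃ N, n = N + 2 := ⟨n - 2, by omega⟩
  rw [show N + 2 - 1 = N + 1 from rfl, show N + 2 - 2 = N from rfl,
    lpoly_eq, lpoly_eq, lpoly_eq, Finset.mul_sum, Finset.mul_sum]
  rw [Finset.sum_congr rfl (fun k hk =>
    show Polynomial.X * (Polynomial.C (cc m s (N + 1) k) * Polynomial.X ^ (N + 1 - 2 * k))
        = Polynomial.C (cc m s (N + 1) k) * Polynomial.X ^ (N + 2 - 2 * k) by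
      rw [show N + 2 - 2 * k = (N + 1 - 2 * k) + 1 from by
        have := Finset.mem_range.mp hk; omega, pow_succ]
      ring)]
  rw [Finset.sum_congr rfl (fun k _ =>
    show Polynomial.C (s * lamSC m N) * (Polynomial.C (cc m s N k) * Polynomial.X ^ (N - 2 * k))
        = Polynomial.C (s * lamSC m N * cc m s N k) * Polynomial.X ^ (N - 2 * k) by
      rw [← mul_assoc, ← Polynomial.C_mul])]
  rw [show (N + 2) / 2 + 1 = (N / 2 + 1) + 1 from by omega]
  rw [Finset.sum_range_succ'
    (fun k => Polynomial.C (cc m s (N + 2) k) * Polynomial.X ^ (N + 2 - 2 * k)) (N / 2 + 1)]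
  rw [Finset.sum_range_succ'
    (fun k => Polynomial.C (cc m s (N + 1) k) * Polynomial.X ^ (N + 2 - 2 * k)) ((N + 1) / 2)]
  simp only [cc_zero, Nat.mul_zero, Nat.sub_zero, map_one, one_mul]
  simp only [show ∀ k : ℕ, N + 2 - 2 * (k + 1) = N - 2 * k from fun k => by omega]
  have hmain :
      (∑ k ∈ Finset.range (N / 2 + 1),
          Polynomial.C (cc m s (N + 2) (k + 1)) * Polynomial.X ^ (N - 2 * k))
      = (∑ k ∈ Finset.range ((N + 1) / 2),
          Polynomial.C (cc m s (N + 1) (k + 1)) * Polynomial.X ^ (N - 2 * k))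
        + ∑ k ∈ Finset.range (N / 2 + 1),
            Polynomial.C (s * lamSC m N * cc m s N k) * Polynomial.X ^ (N - 2 * k) := by
    rcases Nat.even_or_odd N with ⟨t, rfl⟩ | ⟨t, rfl⟩
    · rw [show (t + t) / 2 + 1 = t + 1 from by omega,
        show (t + t + 1) / 2 = t from by omega]
      rw [Finset.sum_range_succ
        (fun k => Polynomial.C (cc m s (t + t + 2) (k + 1)) * Polynomial.X ^ (t + t - 2 * k)) t]
      rw [Finset.sum_range_succ
        (fun k => Polynomial.C (s * lamSC m (t + t) * cc m s (t + t) k)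
          * Polynomial.X ^ (t + t - 2 * k)) t]
      rw [Finset.sum_congr rfl (fun k hk =>
        show Polynomial.C (cc m s (t + t + 2) (k + 1)) * Polynomial.X ^ (t + t - 2 * k)
            = Polynomial.C (cc m s (t + t + 1) (k + 1)) * Polynomial.X ^ (t + t - 2 * k)
              + Polynomial.C (s * lamSC m (t + t) * cc m s (t + t) k)
                * Polynomial.X ^ (t + t - 2 * k) by
          rw [E1 m hm s (t + t) k (by have := Finset.mem_range.mp hk; omega),
            Polynomial.C_add, add_mul])]
      rw [Finset.sum_add_distrib, E2 m hm s t]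
      ring
    · rw [show (2 * t + 1) / 2 + 1 = t + 1 from by omega,
        show (2 * t + 1 + 1) / 2 = t + 1 from by omega, ← Finset.sum_add_distrib]
      exact Finset.sum_congr rfl (fun k hk => by
        rw [E1 m hm s (2 * t + 1) k (by have := Finset.mem_range.mp hk; omega),
          Polynomial.C_add, add_mul])
  rw [hmain]
  ring
end

section
/- With l_n(x,m,s) = ∑_{k=0}^{⌊n/2⌋} (n!/(k!·(n-2k)!)) · (1/∏_{j=1}^{k}(m+n-j)) · s^k · x^{n-2k} for m ≥ 1, one has the inverse expansion x^n = ∑_{k=0}^{⌊n/2⌋} (n!/(k!·(n-2k)!)) · ((n+m-2k)!/(n+m-k)!) · (-s)^k · l_{n-2k}(x,m,s) as polynomials over ℚ. -/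
open Polynomial
open Finset

lemma prod_desc (a j : ℕ) (h : j ≤ a) :
    ∏ i ∈ Finset.Icc 1 j, ((a:ℚ) + 1 - (i:ℚ)) = (a.factorial : ℚ) / ((a-j).factorial : ℚ) := by
  induction j with
  | zero =>
    simp [div_self (show ((a.factorial:ℚ)) ≠ 0 by exact_mod_cast a.factorial_ne_zero)]
  | succ j ih =>
    rw [Finset.prod_Icc_succ_top (by omega : 1 ≤ j+1), ih (by omega)]
    obtain ⟨b, rfl⟩ : ∃ b, a = b + (j+1) := ⟨a - (j+1), by omega⟩
    have h1 : b + (j+1) - j = b + 1 := by omega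
    have h2 : b + (j+1) - (j+1) = b := by omega
    rw [h1, h2, Nat.factorial_succ]
    have hb : ((b.factorial : ℚ)) ≠ 0 := by exact_mod_cast b.factorial_ne_zero
    have hb1 : (((b+1) : ℕ).factorial : ℚ) ≠ 0 := by exact_mod_cast (b+1).factorial_ne_zero
    push_cast
    field_simp
    ring

/-- telescoping witness -/
def Wfun (p r k : ℕ) : ℚ :=
  (-1:ℚ)^k * (r.choose k) * (k:ℚ) * ((p + r - k + 1).factorial : ℚ)
    / ((p + 2*r + 1 - k).factorial : ℚ)

lemma czero (m n r : ℕ) (hm : 1 ≤ m) (hr : 1 ≤ r) (hrn : 2*r ≤ n) (s : ℚ) :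
    ∑ k ∈ Finset.range (r+1),
      ((n.factorial : ℚ) / ((k.factorial : ℚ) * ((n - 2*k).factorial : ℚ))
          * (((n + m - 2*k).factorial : ℚ) / ((n + m - k).factorial : ℚ)) * (-s)^k)
      * (((n - 2*k).factorial : ℚ)
          / (((r-k).factorial : ℚ) * (((n - 2*k) - 2*(r-k)).factorial : ℚ))
          * (∏ j ∈ Finset.Icc 1 (r-k), ((m:ℚ) + ((n - 2*k : ℕ) : ℚ) - (j:ℚ)))⁻¹
          * s^(r-k)) = 0 := by
  obtain ⟨d, rfl⟩ : ∃ d, n = 2*r + d := ⟨n - 2*r, by omega⟩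
  obtain ⟨e, rfl⟩ : ∃ e, m = e + 1 := ⟨m - 1, by omega⟩
  have hterm : ∀ k ∈ Finset.range (r+1),
      (((2*r+d).factorial : ℚ) / ((k.factorial : ℚ) * ((2*r+d - 2*k).factorial : ℚ))
          * (((2*r+d + (e+1) - 2*k).factorial : ℚ) / ((2*r+d + (e+1) - k).factorial : ℚ)) * (-s)^k)
      * (((2*r+d - 2*k).factorial : ℚ)
          / (((r-k).factorial : ℚ) * (((2*r+d - 2*k) - 2*(r-k)).factorial : ℚ))
          * (∏ j ∈ Finset.Icc 1 (r-k), (((e+1:ℕ):ℚ) + ((2*r+d - 2*k : ℕ) : ℚ) - (j:ℚ)))⁻¹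
          * s^(r-k))
      = (((2*r+d).factorial : ℚ) / (d.factorial : ℚ) * s^r / ((r.factorial : ℚ) * (r:ℚ)))
        * (Wfun (e+d) r k - Wfun (e+d) r (k+1)) := by
    intro k hk
    simp only [Finset.mem_range] at hk
    have hkr : k ≤ r := by omega
    -- common cast facts
    have hfac : ∀ a : ℕ, ((a.factorial : ℚ)) ≠ 0 := fun a => by exact_mod_cast a.factorial_ne_zero
    rcases eq_or_lt_of_le hkr with rfl | hklt
    · -- k = r case
      have e1 : 2*k+d - 2*k = d := by omega
      have e2 : k - k = 0 := by omega
      have e3 : 2*k+d + (e+1) - 2*k = e+d+1 := by omega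
      have e4 : 2*k+d + (e+1) - k = e+d+k+1 := by omega
      have e7 : e+d+k-k+1 = e+d+1 := by omega
      have e8 : e+d+2*k+1-k = e+d+k+1 := by omega
      rw [e1, e2, e3, e4]
      simp only [Wfun, Nat.choose_succ_self, Nat.cast_zero, mul_zero, zero_mul, zero_div,
        sub_zero, Nat.choose_self, Nat.cast_one, e7, e8]
      rw [Nat.sub_zero]
      simp only [Nat.factorial_zero, Finset.Icc_eq_empty (by omega : ¬ (1:ℕ) ≤ 0),
        Finset.prod_empty, inv_one, pow_zero, Nat.cast_one]
      have hk0 : (k:ℚ) ≠ 0 := by exact_mod_cast (by omega : k ≠ 0)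
      rw [neg_pow]
      field_simp
    · -- k < r
      obtain ⟨q, rfl, hq1⟩ : ∃ q, r = k + q ∧ 1 ≤ q := ⟨r - k, by omega, by omega⟩
      have e1 : 2*(k+q)+d - 2*k = 2*q+d := by omega
      have e2 : k+q - k = q := by omega
      have e3 : 2*(k+q)+d + (e+1) - 2*k = e+d+2*q+1 := by omega
      have e4 : 2*(k+q)+d + (e+1) - k = e+d+2*q+k+1 := by omega
      rw [e1, e2, e3, e4]
      have e5 : 2*q+d - 2*q = d := by omega
      rw [e5]
      -- the product
      have ecast : ((e+1:ℕ):ℚ) + ((2*q+d : ℕ) : ℚ) = (((e+d+2*q : ℕ)) : ℚ) + 1 := by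
        push_cast; ring
      rw [show (fun j : ℕ => ((e+1:ℕ):ℚ) + ((2*q+d : ℕ) : ℚ) - (j:ℚ))
            = (fun j : ℕ => (((e+d+2*q : ℕ)) : ℚ) + 1 - (j:ℚ)) from funext fun j => by rw [ecast]]
      rw [prod_desc (e+d+2*q) q (by omega)]
      have e6 : e+d+2*q - q = e+d+q := by omega
      rw [e6]
      -- unfold Wfun
      have e7 : e+d+(k+q)-k+1 = e+d+q+1 := by omega
      have e8 : e+d+2*(k+q)+1-k = e+d+2*q+k+1 := by omega
      have e9 : e+d+(k+q)-(k+1)+1 = e+d+q := by omega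
      have e10 : e+d+2*(k+q)+1-(k+1) = e+d+2*q+k := by omega
      simp only [Wfun, e7, e8, e9, e10]
      -- choose facts
      have hc1 : (((k+q).choose k : ℕ) : ℚ) * (k.factorial : ℚ) * (q.factorial : ℚ)
          = ((k+q).factorial : ℚ) := by
        exact_mod_cast congrArg (Nat.cast (R := ℚ))
          (by simpa using Nat.choose_mul_factorial_mul_factorial (show k ≤ k+q by omega))
      have hc2 : (((k+q).choose (k+1) : ℕ) : ℚ) * ((k:ℚ)+1) = (((k+q).choose k : ℕ) : ℚ) * (q:ℚ) := by
        have := Nat.choose_succ_right_eq (k+q) k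
        have h2 : k + q - k = q := by omega
        rw [h2] at this
        exact_mod_cast congrArg (Nat.cast (R := ℚ)) this
      have hc2' : (((k+q).choose (k+1) : ℕ) : ℚ)
          = (((k+q).choose k : ℕ) : ℚ) * (q:ℚ) / ((k:ℚ)+1) := by
        rw [eq_div_iff (by positivity)]
        exact_mod_cast hc2
      rw [hc2']
      -- factorial succ expansions
      have hf4 : ((e+d+2*q+1).factorial : ℚ) = ((e:ℚ)+d+2*q+1) * ((e+d+2*q).factorial : ℚ) := by
        rw [Nat.factorial_succ]; push_cast; ring
      have hf6 : ((e+d+q+1).factorial : ℚ) = ((e:ℚ)+d+q+1) * ((e+d+q).factorial : ℚ) := by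
        rw [Nat.factorial_succ]; push_cast; ring
      have hf8 : ((e+d+2*q+k+1).factorial : ℚ) = ((e:ℚ)+d+2*q+k+1) * ((e+d+2*q+k).factorial : ℚ) := by
        rw [Nat.factorial_succ]; push_cast; ring
      rw [hf4, hf6, hf8, ← hc1]
      have hch : (((k+q).choose k : ℕ) : ℚ) ≠ 0 := by
        exact_mod_cast (Nat.choose_pos (show k ≤ k+q by omega)).ne'
      have hkq : ((k:ℚ)+(q:ℚ)) ≠ 0 := by
        have : (0:ℚ) < (k:ℚ)+(q:ℚ) := by exact_mod_cast (by omega : 0 < k + q)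
        exact this.ne'
      have hde1 : ((e:ℚ)+d+2*q+k+1) ≠ 0 := by positivity
      have hde2 : ((e:ℚ)+d+q+1) ≠ 0 := by positivity
      have hcast : ((k+q : ℕ) : ℚ) = (k:ℚ)+(q:ℚ) := by push_cast; ring
      rw [hcast, neg_pow, pow_succ, pow_add]
      field_simp [hfac]
      push_cast
      ring
  rw [Finset.sum_congr rfl hterm, ← Finset.mul_sum, Finset.sum_range_sub']
  have hW0 : Wfun (e+d) r 0 = 0 := by simp [Wfun]
  have hW1 : Wfun (e+d) r (r+1) = 0 := by simp [Wfun, Nat.choose_succ_self]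
  rw [hW0, hW1, sub_zero, mul_zero]


lemma sum_reindex {M : Type*} [AddCommMonoid M] (n : ℕ) (f : ℕ → ℕ → M) :
    ∑ k ∈ Finset.range (n/2+1), ∑ j ∈ Finset.range ((n-2*k)/2+1), f k (k+j)
    = ∑ r ∈ Finset.range (n/2+1), ∑ k ∈ Finset.range (r+1), f k r := by
  rw [Finset.sum_sigma', Finset.sum_sigma']
  apply Finset.sum_bij' (i := fun x _ => (⟨x.1 + x.2, x.1⟩ : (_ : ℕ) × ℕ))
    (j := fun x _ => (⟨x.2, x.1 - x.2⟩ : (_ : ℕ) × ℕ))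
  · rintro ⟨k, j⟩ h
    simp only [Finset.mem_sigma, Finset.mem_range, Nat.lt_succ_iff] at h ⊢
    obtain ⟨h1, h2⟩ := h
    have h1' : k*2 ≤ n := (Nat.le_div_iff_mul_le two_pos).1 h1
    have h2' : j*2 ≤ n - 2*k := (Nat.le_div_iff_mul_le two_pos).1 h2
    exact ⟨(Nat.le_div_iff_mul_le two_pos).2 (by omega), by omega⟩
  · rintro ⟨r, k⟩ h
    simp only [Finset.mem_sigma, Finset.mem_range, Nat.lt_succ_iff] at h ⊢
    obtain ⟨h1, h2⟩ := h
    have h1' : r*2 ≤ n := (Nat.le_div_iff_mul_le two_pos).1 h1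
    exact ⟨(Nat.le_div_iff_mul_le two_pos).2 (by omega),
      (Nat.le_div_iff_mul_le two_pos).2 (by omega)⟩
  · rintro ⟨k, j⟩ h
    rw [Nat.add_sub_cancel_left]
  · rintro ⟨r, k⟩ h
    simp only [Finset.mem_sigma, Finset.mem_range, Nat.lt_succ_iff] at h
    rw [Nat.add_sub_cancel' h.2]
  · rintro ⟨k, j⟩ h
    rfl


theorem super_catalan_stmt8 (m : ℕ) (hm : 1 ≤ m) (s : ℚ) (n : ℕ) :
    (Polynomial.X : Polynomial ℚ) ^ n
      = ∑ k ∈ Finset.range (n / 2 + 1),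
          Polynomial.C ((n.factorial : ℚ) / ((k.factorial : ℚ) * ((n - 2 * k).factorial : ℚ))
              * (((n + m - 2 * k).factorial : ℚ) / ((n + m - k).factorial : ℚ)) * (-s) ^ k)
            * lpoly m s (n - 2 * k) := by
  have hfac : ∀ a : ℕ, ((a.factorial : ℚ)) ≠ 0 := fun a => by exact_mod_cast a.factorial_ne_zero
  have h1 : ∀ k ∈ Finset.range (n/2+1),
      Polynomial.C ((n.factorial : ℚ) / ((k.factorial : ℚ) * ((n - 2 * k).factorial : ℚ))
              * (((n + m - 2 * k).factorial : ℚ) / ((n + m - k).factorial : ℚ)) * (-s) ^ k)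
            * lpoly m s (n - 2 * k)
      = ∑ j ∈ Finset.range ((n - 2*k)/2 + 1),
          (fun k r => Polynomial.C ((n.factorial : ℚ) / ((k.factorial : ℚ) * ((n - 2 * k).factorial : ℚ))
              * (((n + m - 2 * k).factorial : ℚ) / ((n + m - k).factorial : ℚ)) * (-s) ^ k
              * (((n - 2*k).factorial : ℚ) / (((r-k).factorial : ℚ) * (((n - 2*k) - 2*(r-k)).factorial : ℚ))
                * (∏ i ∈ Finset.Icc 1 (r-k), ((m : ℚ) + ((n - 2*k : ℕ) : ℚ) - (i : ℚ)))⁻¹ * s ^ (r-k)))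
            * Polynomial.X ^ (n - 2*r)) k (k + j) := by
    intro k hk
    rw [lpoly, Finset.mul_sum]
    refine Finset.sum_congr rfl fun j hj => ?_
    simp only
    rw [show k + j - k = j from by omega, show n - 2*k - 2*j = n - 2*(k+j) from by omega]
    simp only [map_mul]
    ring
  rw [Finset.sum_congr rfl h1, sum_reindex n
    (fun k r => Polynomial.C ((n.factorial : ℚ) / ((k.factorial : ℚ) * ((n - 2 * k).factorial : ℚ))
              * (((n + m - 2 * k).factorial : ℚ) / ((n + m - k).factorial : ℚ)) * (-s) ^ k
              * (((n - 2*k).factorial : ℚ) / (((r-k).factorial : ℚ) * (((n - 2*k) - 2*(r-k)).factorial : ℚ))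
                * (∏ i ∈ Finset.Icc 1 (r-k), ((m : ℚ) + ((n - 2*k : ℕ) : ℚ) - (i : ℚ)))⁻¹ * s ^ (r-k)))
            * Polynomial.X ^ (n - 2*r))]
  have h2 : ∀ r ∈ Finset.range (n/2+1),
      (∑ k ∈ Finset.range (r+1),
        Polynomial.C ((n.factorial : ℚ) / ((k.factorial : ℚ) * ((n - 2 * k).factorial : ℚ))
              * (((n + m - 2 * k).factorial : ℚ) / ((n + m - k).factorial : ℚ)) * (-s) ^ k
              * (((n - 2*k).factorial : ℚ) / (((r-k).factorial : ℚ) * (((n - 2*k) - 2*(r-k)).factorial : ℚ))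
                * (∏ i ∈ Finset.Icc 1 (r-k), ((m : ℚ) + ((n - 2*k : ℕ) : ℚ) - (i : ℚ)))⁻¹ * s ^ (r-k)))
            * Polynomial.X ^ (n - 2*r))
      = if r = 0 then (Polynomial.X : Polynomial ℚ)^n else 0 := by
    intro r hr
    simp only [Finset.mem_range, Nat.lt_succ_iff] at hr
    have hrn : 2*r ≤ n := by
      have := (Nat.le_div_iff_mul_le two_pos).1 hr
      omega
    rw [← Finset.sum_mul, ← map_sum]
    rcases Nat.eq_zero_or_pos r with rfl | hrpos
    · simp only [if_pos rfl]
      rw [Finset.sum_range_one]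
      norm_num [Finset.Icc_eq_empty (show ¬(1:ℕ) ≤ 0 by omega), div_self (hfac n),
        div_self (hfac (n+m))]
    · rw [czero m n r hm hrpos hrn s, if_neg (by omega), map_zero, zero_mul]
  rw [Finset.sum_congr rfl h2, Finset.sum_ite_eq' (Finset.range (n/2+1)) 0
    (fun _ => (Polynomial.X : Polynomial ℚ)^n), if_pos (Finset.mem_range.2 (Nat.succ_pos _))]
end

section
/- Let Λ_m be the linear functional on ℚ[x] determined by Λ_m(l_n(x,m,s)) = [n=0], where l_n(x,m,s) = ∑_{k=0}^{⌊n/2⌋} (n!/(k!·(n-2k)!)) · (1/∏_{j=1}^{k}(m+n-j)) · s^k · x^{n-2k} and m ≥ 1. Then Λ_m(x^{2n+1}) = 0 and Λ_m(x^{2n}) = (-s)^n · (2n)!·m!/(n!·(m+n)!). -/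
open Polynomial

open Finset fwdDiff

open Polynomial Finset fwdDiff

lemma my_fwdDiff_eval (q : Polynomial ℚ) :
    Δ_[1] (fun k : ℕ => q.eval (k : ℚ)) = fun k : ℕ => (q.comp (X + C 1) - q).eval (k : ℚ) := by
  funext k
  simp [fwdDiff, eval_comp]

lemma my_deg_drop (q : Polynomial ℚ) (hq : q.comp (X + C 1) - q ≠ 0) :
    (q.comp (X + C 1) - q).natDegree < q.natDegree := by
  have hq0 : q ≠ 0 := by rintro rfl; simp at hq
  have hX : (X + C (1:ℚ)).natDegree = 1 := by
    simpa using natDegree_X_add_C (1:ℚ)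
  have hlc : (q.comp (X + C 1)).leadingCoeff = q.leadingCoeff := by
    rw [leadingCoeff_comp (by rw [hX]; norm_num), leadingCoeff_X_add_C, one_pow, mul_one]
  have hcomp0 : q.comp (X + C 1) ≠ 0 := by
    intro h
    apply hq0
    rw [← leadingCoeff_eq_zero, ← hlc, h, leadingCoeff_zero]
  have hdeg : (q.comp (X + C 1)).degree = q.degree := by
    rw [degree_eq_natDegree hcomp0, degree_eq_natDegree hq0, natDegree_comp, hX, mul_one]
  have := degree_sub_lt hdeg hcomp0 hlc
  rw [hdeg] at this
  exact natDegree_lt_natDegree hq this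

lemma my_fwdDiff_iter_zero : ∀ n : ℕ,
    (Δ_[1])^[n] (fun _ : ℕ => (0:ℚ)) = fun _ => 0 := by
  intro n
  induction n with
  | zero => rfl
  | succ n ih =>
      rw [Function.iterate_succ_apply,
        show Δ_[1] (fun _ : ℕ => (0:ℚ)) = fun _ => 0 by funext k; simp [fwdDiff]]
      exact ih

lemma my_fwdDiff_poly_zero : ∀ n : ℕ, ∀ q : Polynomial ℚ, q.natDegree < n →
    (Δ_[1])^[n] (fun k : ℕ => q.eval (k : ℚ)) = fun _ => 0 := by
  intro n
  induction n with
  | zero => intro q hq; omega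
  | succ n ih =>
    intro q hq
    rw [Function.iterate_succ_apply, my_fwdDiff_eval]
    by_cases h : q.comp (X + C 1) - q = 0
    · rw [h]
      simp only [eval_zero]
      exact my_fwdDiff_iter_zero n
    · exact ih _ (lt_of_lt_of_le (my_deg_drop q h) (by omega))

lemma my_alt_sum (t : ℕ) (p : Polynomial ℚ) (hp : p.natDegree < t) :
    ∑ k ∈ range (t + 1), ((-1:ℚ) ^ (t - k) * (t.choose k : ℚ)) * p.eval (k : ℚ) = 0 := by
  have h := fwdDiff_iter_eq_sum_shift (1 : ℕ) (fun k : ℕ => p.eval (k : ℚ)) t 0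
  rw [my_fwdDiff_poly_zero t p hp] at h
  have h0 : (0:ℚ) = ∑ k ∈ range (t + 1),
      ((-1:ℤ) ^ (t - k) * (t.choose k : ℤ)) • p.eval (((0 + k • 1 : ℕ)) : ℚ) := h
  calc ∑ k ∈ range (t + 1), ((-1:ℚ) ^ (t - k) * (t.choose k : ℚ)) * p.eval (k : ℚ)
      = ∑ k ∈ range (t + 1),
        ((-1:ℤ) ^ (t - k) * (t.choose k : ℤ)) • p.eval (((0 + k • 1 : ℕ)) : ℚ) := by
        apply Finset.sum_congr rfl
        intro k _
        push_cast [zsmul_eq_mul]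
        norm_num
    _ = 0 := h0.symm

-- (∏_{i=1}^{b} (a+i)) * a! = (a+b)!
lemma my_prod_fact (a : ℕ) : ∀ b : ℕ,
    (∏ i ∈ Icc 1 b, ((a:ℚ) + (i:ℚ))) * (a.factorial : ℚ) = ((a + b).factorial : ℚ) := by
  intro b
  induction b with
  | zero => simp
  | succ b ih =>
    rw [Finset.prod_Icc_succ_top (by omega)]
    have : ((a + (b+1)).factorial : ℚ) = ((a:ℚ) + (b+1:ℕ)) * ((a+b).factorial : ℚ) := by
      rw [show a + (b+1) = (a+b)+1 by ring, Nat.factorial_succ]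
      push_cast; ring
    rw [this, ← ih]
    push_cast; ring

-- (∏_{j=1}^{k} (M-j)) * (M-1-k)! = (M-1)!  for k < M
lemma my_prod_fact' (M : ℕ) : ∀ k : ℕ, k < M →
    (∏ j ∈ Icc 1 k, ((M:ℚ) - (j:ℚ))) * (((M - 1 - k).factorial : ℕ) : ℚ)
      = (((M - 1).factorial : ℕ) : ℚ) := by
  intro k
  induction k with
  | zero => simp
  | succ k ih =>
    intro hk
    rw [Finset.prod_Icc_succ_top (by omega)]
    have h1 : ((M:ℚ) - (k+1:ℕ)) * (((M - 1 - (k+1)).factorial : ℕ) : ℚ)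
        = (((M - 1 - k).factorial : ℕ) : ℚ) := by
      rw [show M - 1 - k = (M - 1 - (k+1)) + 1 by omega, Nat.factorial_succ]
      push_cast [show (M - 1 - (k+1) : ℕ) + 1 = M - (k+1) by omega]
      rw [Nat.cast_sub (by omega)]
      push_cast; ring
    calc (∏ j ∈ Icc 1 k, ((M:ℚ) - (j:ℚ))) * ((M:ℚ) - (k+1:ℕ)) * (((M-1-(k+1)).factorial : ℕ):ℚ)
        = (∏ j ∈ Icc 1 k, ((M:ℚ) - (j:ℚ))) * (((M - 1 - k).factorial : ℕ) : ℚ) := by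
          rw [mul_assoc, h1]
      _ = _ := ih (by omega)

noncomputable def gdef (m : ℕ) (s : ℚ) (j : ℕ) : ℚ :=
  (-s) ^ j * ((2 * j).factorial : ℚ) * (m.factorial : ℚ)
    / ((j.factorial : ℚ) * ((m + j).factorial : ℚ))

lemma my_key (m : ℕ) (hm : 1 ≤ m) (s : ℚ) (t : ℕ) (ht : 1 ≤ t) :
    ∑ k ∈ range (t + 1),
      (((2*t).factorial : ℚ) / ((k.factorial : ℚ) * ((2*t - 2*k).factorial : ℚ))
        * (∏ j ∈ Icc 1 k, ((m:ℚ) + ((2*t : ℕ) : ℚ) - (j:ℚ)))⁻¹ * s ^ k) * gdef m s (t - k)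
      = 0 := by
  set p : Polynomial ℚ := ∏ i ∈ Icc 1 (t-1), (C ((m:ℚ) + (t:ℚ) + (i:ℚ)) - X) with hp
  have hdeg : p.natDegree < t := by
    have h1 : ∀ i : ℕ, (C ((m:ℚ) + (t:ℚ) + (i:ℚ)) - X).natDegree = 1 := fun i => by
      rw [show C ((m:ℚ) + (t:ℚ) + (i:ℚ)) - X = -(X - C ((m:ℚ) + (t:ℚ) + (i:ℚ))) by ring,
        natDegree_neg, natDegree_X_sub_C]
    calc p.natDegree ≤ ∑ i ∈ Icc 1 (t-1), (C ((m:ℚ) + (t:ℚ) + (i:ℚ)) - X).natDegree :=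
          natDegree_prod_le _ _
      _ = ∑ _i ∈ Icc 1 (t-1), 1 := Finset.sum_congr rfl (fun i _ => h1 i)
      _ = t - 1 := by simp
      _ < t := by omega
  set C0 : ℚ := s^t * ((2*t).factorial : ℚ) * (m.factorial : ℚ)
      / ((t.factorial : ℚ) * ((m + 2*t - 1).factorial : ℚ)) with hC0
  calc ∑ k ∈ range (t + 1),
      (((2*t).factorial : ℚ) / ((k.factorial : ℚ) * ((2*t - 2*k).factorial : ℚ))
        * (∏ j ∈ Icc 1 k, ((m:ℚ) + ((2*t : ℕ) : ℚ) - (j:ℚ)))⁻¹ * s ^ k) * gdef m s (t - k)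
      = ∑ k ∈ range (t + 1), C0 * (((-1:ℚ) ^ (t - k) * (t.choose k : ℚ)) * p.eval (k : ℚ)) := by
        apply Finset.sum_congr rfl
        intro k hk
        rw [Finset.mem_range] at hk
        have hkt : k ≤ t := by omega
        -- p.eval k
        have hpe : p.eval (k:ℚ) * (((m + t - k).factorial : ℕ) : ℚ)
            = (((m + 2*t - 1 - k).factorial : ℕ) : ℚ) := by
          have e1 : p.eval (k:ℚ) = ∏ i ∈ Icc 1 (t-1), (((m + t - k : ℕ):ℚ) + (i:ℚ)) := by
            rw [hp, eval_prod]
            apply Finset.prod_congr rfl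
            intro i _
            rw [eval_sub, eval_C, eval_X, Nat.cast_sub (by omega)]
            push_cast; ring
          rw [e1, my_prod_fact (m + t - k) (t-1),
            show m + t - k + (t-1) = m + 2*t - 1 - k by omega]
        -- the inverse product
        have hpr : (∏ j ∈ Icc 1 k, ((m:ℚ) + ((2*t : ℕ) : ℚ) - (j:ℚ)))
            = (((m + 2*t - 1).factorial : ℕ) : ℚ) / (((m + 2*t - 1 - k).factorial : ℕ) : ℚ) := by
          have e2 : (∏ j ∈ Icc 1 k, ((m:ℚ) + ((2*t : ℕ) : ℚ) - (j:ℚ)))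
              = ∏ j ∈ Icc 1 k, (((m + 2*t : ℕ):ℚ) - (j:ℚ)) := by
            apply Finset.prod_congr rfl; intro j _; push_cast; ring
          rw [e2, eq_div_iff (by positivity),
            show m + 2*t - 1 = m + 2*t - 1 - 0 by omega]
          have := my_prod_fact' (m + 2*t) k (by omega)
          rw [show m + 2*t - 1 - 0 = m + 2*t - 1 by omega]
          exact this
        have hpe' : p.eval (k:ℚ)
            = (((m + 2*t - 1 - k).factorial : ℕ) : ℚ) / (((m + t - k).factorial : ℕ) : ℚ) := by
          rw [eq_div_iff (by positivity)]; exact hpe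
        rw [hpr, hpe', Nat.cast_choose ℚ hkt, gdef,
          show 2*(t-k) = 2*t - 2*k by omega,
          show m + (t - k) = m + t - k by omega,
          show (-s) ^ (t-k) = (-1:ℚ)^(t-k) * s^(t-k) by rw [neg_pow],
          hC0, show s ^ t = s ^ k * s ^ (t-k) by rw [← pow_add]; congr 1; omega]
        have hfac : ∀ N : ℕ, ((N.factorial : ℕ) : ℚ) ≠ 0 := fun N => by positivity
        field_simp
    _ = C0 * ∑ k ∈ range (t + 1), ((-1:ℚ) ^ (t - k) * (t.choose k : ℚ)) * p.eval (k : ℚ) := by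
        rw [Finset.mul_sum]
    _ = 0 := by rw [my_alt_sum t p hdeg, mul_zero]

lemma my_main (m : ℕ) (hm : 1 ≤ m) (s : ℚ) (L : Polynomial ℚ →ₗ[ℚ] ℚ)
    (hL : ∀ n : ℕ, L (lpoly m s n) = if n = 0 then 1 else 0) :
    ∀ N : ℕ, L (X ^ N) = if N % 2 = 1 then 0 else gdef m s (N / 2) := by
  intro N
  induction N using Nat.strong_induction_on with
  | _ N ih =>
  have h := hL N
  rw [lpoly, map_sum] at h
  simp_rw [← Polynomial.smul_eq_C_mul, map_smul, smul_eq_mul] at h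
  rw [Finset.sum_range_succ'] at h
  have hc0 : ((N.factorial : ℚ) / (((0:ℕ).factorial : ℚ) * ((N - 2 * 0).factorial : ℚ))
      * (∏ j ∈ (Finset.Icc 1 0 : Finset ℕ), ((m : ℚ) + (N : ℚ) - (j : ℚ)))⁻¹ * s ^ 0) = 1 := by
    norm_num
    exact Nat.factorial_ne_zero _
  rw [hc0, one_mul, show N - 2*0 = N from by omega] at h
  rcases Nat.even_or_odd N with hN | hN
  · -- even case
    obtain ⟨t, rfl⟩ : ∃ t, N = 2 * t := by
      obtain ⟨t, ht⟩ := hN; exact ⟨t, by omega⟩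
    rw [if_neg (by omega)]
    rw [show 2 * t / 2 = t by omega] at h ⊢
    rcases Nat.eq_zero_or_pos t with rfl | ht
    · have hg : gdef m s 0 = 1 := by
        rw [gdef]
        norm_num
        exact Nat.factorial_ne_zero _
      rw [hg]
      norm_num at h ⊢
      exact h
    · rw [if_neg (by omega)] at h
      have hterm : ∀ k ∈ Finset.range t,
          (((2*t).factorial : ℚ) / (((k+1).factorial : ℚ) * ((2*t - 2*(k+1)).factorial : ℚ))
            * (∏ j ∈ Finset.Icc 1 (k+1), ((m : ℚ) + ((2*t : ℕ) : ℚ) - (j : ℚ)))⁻¹ * s ^ (k+1))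
            * L (X ^ (2*t - 2*(k+1)))
          = (((2*t).factorial : ℚ) / (((k+1).factorial : ℚ) * ((2*t - 2*(k+1)).factorial : ℚ))
            * (∏ j ∈ Finset.Icc 1 (k+1), ((m : ℚ) + ((2*t : ℕ) : ℚ) - (j : ℚ)))⁻¹ * s ^ (k+1))
            * gdef m s (t - (k+1)) := by
        intro k hk
        rw [Finset.mem_range] at hk
        rw [ih (2*t - 2*(k+1)) (by omega), if_neg (by omega),
          show (2*t - 2*(k+1)) / 2 = t - (k+1) by omega]
      rw [Finset.sum_congr rfl hterm] at h
      have hkey := my_key m hm s t ht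
      rw [Finset.sum_range_succ'] at hkey
      have hc0' : (((2*t).factorial : ℚ) / (((0:ℕ).factorial : ℚ) * ((2*t - 2*0).factorial : ℚ))
          * (∏ j ∈ (Finset.Icc 1 0 : Finset ℕ), ((m : ℚ) + ((2*t : ℕ) : ℚ) - (j : ℚ)))⁻¹ * s ^ 0) = 1 := by
        norm_num
        exact Nat.factorial_ne_zero _
      rw [hc0', one_mul, Nat.sub_zero] at hkey
      linarith [h, hkey]
  · -- odd case
    have hN' : N % 2 = 1 := Nat.odd_iff.mp hN
    rw [if_pos (by omega)]
    rw [if_neg (by omega)] at h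
    have hterm : ∀ k ∈ Finset.range (N/2),
        ((N.factorial : ℚ) / (((k+1).factorial : ℚ) * ((N - 2*(k+1)).factorial : ℚ))
          * (∏ j ∈ Finset.Icc 1 (k+1), ((m : ℚ) + (N : ℚ) - (j : ℚ)))⁻¹ * s ^ (k+1))
          * L (X ^ (N - 2*(k+1))) = 0 := by
      intro k hk
      rw [Finset.mem_range] at hk
      have h2 : 2*(k+1) ≤ N := by omega
      rw [ih (N - 2*(k+1)) (by omega), if_pos (by omega), mul_zero]
    rw [Finset.sum_congr rfl hterm, Finset.sum_const_zero, zero_add] at h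
    exact h


theorem super_catalan_stmt9 (m : ℕ) (hm : 1 ≤ m) (s : ℚ)
    (L : Polynomial ℚ →ₗ[ℚ] ℚ)
    (hL : ∀ n : ℕ, L (lpoly m s n) = if n = 0 then 1 else 0) (n : ℕ) :
    L (Polynomial.X ^ (2 * n + 1)) = 0 ∧
    L (Polynomial.X ^ (2 * n))
      = (-s) ^ n * ((2 * n).factorial : ℚ) * (m.factorial : ℚ)
          / ((n.factorial : ℚ) * ((m + n).factorial : ℚ)) := by
  constructor
  · have h := my_main m hm s L hL (2*n+1)
    rw [if_pos (by omega)] at h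
    exact h
  · have h := my_main m hm s L hL (2*n)
    rw [if_neg (by omega), show 2*n/2 = n from by omega] at h
    rw [h, gdef]
end

section
/- For m ≥ 1, the generating function identity ∑_{n≥0} l_n(x,m,s)·C(n+m-1, m-1)·z^n = 1/(1-xz-sz²)^m holds as formal power series, where l_n(x,m,s) = ∑_{k=0}^{⌊n/2⌋} (n!/(k!·(n-2k)!)) · (1/∏_{j=1}^{k}(m+n-j)) · s^k · x^{n-2k}. -/
open Polynomial

namespace SuperCatalanAux

def a (q n k : ℕ) : ℕ := (q + (n - k)).choose (n - k) * (n - k).choose k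

lemma a_zero_of_lt {q n k : ℕ} (h : n < 2 * k) : a q n k = 0 := by
  unfold a
  have : n - k < k := by omega
  simp [Nat.choose_eq_zero_of_lt this]

noncomputable def P (q : ℕ) (s : ℚ) (n : ℕ) : Polynomial ℚ :=
  ∑ k ∈ Finset.range (n + 1), Polynomial.C ((a q n k : ℚ) * s ^ k) * Polynomial.X ^ (n - 2 * k)

lemma P_zero (q : ℕ) (s : ℚ) : P q s 0 = 1 := by
  simp [P, a]

lemma P_one (q : ℕ) (s : ℚ) : P q s 1 = Polynomial.C ((q + 1 : ℕ) : ℚ) * Polynomial.X := by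
  simp [P, Finset.sum_range_succ, a]

lemma X_mul_P (q : ℕ) (s : ℚ) (n : ℕ) :
    Polynomial.X * P q s (n + 1) =
      ∑ k ∈ Finset.range (n + 3),
        Polynomial.C ((a q (n + 1) k : ℚ) * s ^ k) * Polynomial.X ^ (n + 2 - 2 * k) := by
  rw [Finset.sum_range_succ]
  have h1 : a q (n + 1) (n + 2) = 0 := a_zero_of_lt (by omega)
  rw [h1]
  simp only [Nat.cast_zero, zero_mul, map_zero, zero_mul, add_zero]
  rw [P, Finset.mul_sum]
  refine Finset.sum_congr rfl fun k hk => ?_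
  by_cases h : 2 * k ≤ n + 1
  · have e : n + 2 - 2 * k = (n + 1 - 2 * k) + 1 := by omega
    rw [e, pow_succ]
    ring
  · have hz : a q (n + 1) k = 0 := a_zero_of_lt (by omega)
    simp [hz]

lemma Cs_mul_P (q : ℕ) (s : ℚ) (n : ℕ) :
    Polynomial.C s * P q s n =
      ∑ k ∈ Finset.range (n + 3),
        Polynomial.C ((if k = 0 then 0 else (a q n (k - 1) : ℚ)) * s ^ k) *
          Polynomial.X ^ (n + 2 - 2 * k) := by
  conv_rhs => rw [Finset.sum_range_succ' _ (n + 2)]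
  simp only [reduceIte, Nat.succ_ne_zero, if_false, Nat.add_sub_cancel, zero_mul, map_zero,
    zero_mul, add_zero, pow_zero]
  rw [Finset.sum_range_succ]
  have h1 : a q n (n + 1) = 0 := a_zero_of_lt (by omega)
  rw [h1]
  simp only [Nat.cast_zero, zero_mul, map_zero, zero_mul, add_zero]
  rw [P, Finset.mul_sum]
  refine Finset.sum_congr rfl fun k hk => ?_
  by_cases h : 2 * k ≤ n
  · have e : n + 2 - 2 * (k + 1) = n - 2 * k := by omega
    rw [e, show ((a q n k : ℚ) * s ^ (k + 1)) = s * ((a q n k : ℚ) * s ^ k) from by ring,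
      Polynomial.C_mul]
    simp only [map_mul]
    ring
  · have : a q n k = 0 := a_zero_of_lt (by omega)
    simp [this]

lemma a_rec (p n k : ℕ) :
    a (p + 1) (n + 2) k =
      a (p + 1) (n + 1) k + (if k = 0 then 0 else a (p + 1) n (k - 1)) + a p (n + 2) k := by
  rcases k with _ | k'
  · simp only [reduceIte, add_zero]
    unfold a
    simp only [Nat.sub_zero, Nat.choose_zero_right, mul_one]
    have key : ∀ M : ℕ, (M + 1).choose (n + 2) = M.choose (n + 1) + M.choose (n + 2) :=
      fun M => Nat.choose_succ_succ M (n + 1)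
    rw [show p + 1 + (n + 2) = (p + (n + 2)) + 1 from by omega, key,
      show p + 1 + (n + 1) = p + (n + 2) from by omega]
  · rw [if_neg (Nat.succ_ne_zero k'), Nat.succ_sub_one]
    by_cases hk : k' + 1 ≤ n + 1
    · unfold a
      have e1 : n + 2 - (k' + 1) = (n - k') + 1 := by omega
      have e2 : n + 1 - (k' + 1) = n - k' := by omega
      rw [e1, e2]
      generalize n - k' = j
      rw [show p + 1 + (j + 1) = (p + 1 + j) + 1 from by omega,
        show p + (j + 1) = p + 1 + j from by omega,
        Nat.choose_succ_succ' (p + 1 + j) j, Nat.choose_succ_succ' j k']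
      ring
    · unfold a
      have e1 : n + 2 - (k' + 1) = 0 ∨ n + 2 - (k' + 1) = 1 := by omega
      have e2 : n + 1 - (k' + 1) = 0 := by omega
      have e3 : n - k' = 0 := by omega
      rw [e2, e3]
      have z1 : (0:ℕ).choose (k' + 1) = 0 := Nat.choose_eq_zero_of_lt (by omega)
      have z2 : (0:ℕ).choose k' = 0 := Nat.choose_eq_zero_of_lt (by omega)
      rcases e1 with e1 | e1 <;> rw [e1] <;>
        simp [z1, z2, Nat.choose_eq_zero_of_lt (show (1:ℕ) < k' + 1 by omega)]

lemma a0_rec (n k : ℕ) :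
    a 0 (n + 2) k = a 0 (n + 1) k + (if k = 0 then 0 else a 0 n (k - 1)) := by
  rcases k with _ | k'
  · simp [a]
  · rw [if_neg (Nat.succ_ne_zero k'), Nat.succ_sub_one]
    by_cases hk : k' + 1 ≤ n + 1
    · unfold a
      have e1 : n + 2 - (k' + 1) = (n - k') + 1 := by omega
      have e2 : n + 1 - (k' + 1) = n - k' := by omega
      rw [e1, e2]
      generalize n - k' = j
      simp only [Nat.zero_add, Nat.choose_self, one_mul]
      rw [Nat.choose_succ_succ' j k']
      omega
    · unfold a
      have e1 : n + 2 - (k' + 1) = 0 ∨ n + 2 - (k' + 1) = 1 := by omega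
      have e2 : n + 1 - (k' + 1) = 0 := by omega
      have e3 : n - k' = 0 := by omega
      rw [e2, e3]
      have z1 : (0:ℕ).choose (k' + 1) = 0 := Nat.choose_eq_zero_of_lt (by omega)
      have z2 : (0:ℕ).choose k' = 0 := Nat.choose_eq_zero_of_lt (by omega)
      rcases e1 with e1 | e1 <;> rw [e1] <;>
        simp [z1, z2, Nat.choose_eq_zero_of_lt (show (1:ℕ) < k' + 1 by omega)]

lemma P_rec (p : ℕ) (s : ℚ) (n : ℕ) :
    P (p + 1) s (n + 2) =
      Polynomial.X * P (p + 1) s (n + 1) + Polynomial.C s * P (p + 1) s n + P p s (n + 2) := by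
  rw [X_mul_P, Cs_mul_P]
  rw [show P p s (n + 2) = ∑ k ∈ Finset.range (n + 3),
      Polynomial.C ((a p (n + 2) k : ℚ) * s ^ k) * Polynomial.X ^ (n + 2 - 2 * k) from rfl]
  rw [show P (p + 1) s (n + 2) = ∑ k ∈ Finset.range (n + 3),
      Polynomial.C ((a (p + 1) (n + 2) k : ℚ) * s ^ k) * Polynomial.X ^ (n + 2 - 2 * k) from rfl]
  rw [← Finset.sum_add_distrib, ← Finset.sum_add_distrib]
  refine Finset.sum_congr rfl fun k hk => ?_
  have hc : ((a (p + 1) (n + 2) k : ℚ)) =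
      (a (p + 1) (n + 1) k : ℚ) + (if k = 0 then (0:ℚ) else (a (p + 1) n (k - 1) : ℚ)) +
        (a p (n + 2) k : ℚ) := by
    have h := a_rec p n k
    split_ifs with hif
    · rw [if_pos hif] at h
      exact_mod_cast h
    · rw [if_neg hif] at h
      exact_mod_cast h
  rw [hc]
  simp only [add_mul, map_add]

lemma P0_rec (s : ℚ) (n : ℕ) :
    P 0 s (n + 2) = Polynomial.X * P 0 s (n + 1) + Polynomial.C s * P 0 s n := by
  rw [X_mul_P, Cs_mul_P]
  rw [show P 0 s (n + 2) = ∑ k ∈ Finset.range (n + 3),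
      Polynomial.C ((a 0 (n + 2) k : ℚ) * s ^ k) * Polynomial.X ^ (n + 2 - 2 * k) from rfl]
  rw [← Finset.sum_add_distrib]
  refine Finset.sum_congr rfl fun k hk => ?_
  have hc : ((a 0 (n + 2) k : ℚ)) =
      (a 0 (n + 1) k : ℚ) + (if k = 0 then (0:ℚ) else (a 0 n (k - 1) : ℚ)) := by
    have h := a0_rec n k
    split_ifs with hif
    · rw [if_pos hif] at h
      exact_mod_cast h
    · rw [if_neg hif] at h
      exact_mod_cast h
  rw [hc]
  simp only [add_mul, map_add]

noncomputable def A (s : ℚ) : PowerSeries (Polynomial ℚ) :=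
  1 - PowerSeries.C (R := Polynomial ℚ) Polynomial.X * PowerSeries.X
    - PowerSeries.C (R := Polynomial ℚ) (Polynomial.C s) * PowerSeries.X ^ 2

lemma mulA (c d : ℕ → Polynomial ℚ) (s : ℚ)
    (h0 : c 0 = d 0)
    (h1 : c 1 = Polynomial.X * c 0 + d 1)
    (h2 : ∀ n, c (n + 2) = Polynomial.X * c (n + 1) + Polynomial.C s * c n + d (n + 2)) :
    PowerSeries.mk c * A s = PowerSeries.mk d := by
  have key : ∀ (f : PowerSeries (Polynomial ℚ)) (n : ℕ),
      PowerSeries.coeff n (f * A s) =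
        PowerSeries.coeff n f
          - Polynomial.X * (if 1 ≤ n then PowerSeries.coeff (n - 1) f else 0)
          - Polynomial.C s * (if 2 ≤ n then PowerSeries.coeff (n - 2) f else 0) := by
    intro f n
    rw [A, mul_sub, mul_sub, mul_one, map_sub, map_sub]
    rw [show f * (PowerSeries.C (R := Polynomial ℚ) Polynomial.X * PowerSeries.X) =
      PowerSeries.C (R := Polynomial ℚ) Polynomial.X * (f * PowerSeries.X ^ 1) from by ring]
    rw [show f * (PowerSeries.C (R := Polynomial ℚ) (Polynomial.C s) * PowerSeries.X ^ 2) =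
      PowerSeries.C (R := Polynomial ℚ) (Polynomial.C s) * (f * PowerSeries.X ^ 2) from by ring]
    rw [PowerSeries.coeff_C_mul, PowerSeries.coeff_C_mul,
      PowerSeries.coeff_mul_X_pow', PowerSeries.coeff_mul_X_pow']
  refine PowerSeries.ext fun n => ?_
  rw [key]
  simp only [PowerSeries.coeff_mk]
  match n with
  | 0 => simp [h0]
  | 1 => simp [h1]
  | (n + 2) =>
    rw [h2 n]
    have e1 : (1:ℕ) ≤ n + 2 := by omega
    have e2 : (2:ℕ) ≤ n + 2 := by omega
    rw [if_pos e1, if_pos e2, show n + 2 - 1 = n + 1 from by omega,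
      show n + 2 - 2 = n from by omega]
    ring

lemma main (p : ℕ) (s : ℚ) : PowerSeries.mk (P p s) * (A s) ^ (p + 1) = 1 := by
  induction p with
  | zero =>
    rw [pow_one]
    have h : PowerSeries.mk (P 0 s) * A s =
        PowerSeries.mk (fun n => if n = 0 then 1 else 0) := by
      apply mulA
      · rw [P_zero]; simp
      · rw [P_one, P_zero]; simp
      · intro n
        rw [P0_rec]
        simp
    rw [h]
    refine PowerSeries.ext fun n => ?_
    simp [PowerSeries.coeff_one]
  | succ p ih =>
    have step : PowerSeries.mk (P (p + 1) s) * A s = PowerSeries.mk (P p s) := by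
      apply mulA
      · rw [P_zero, P_zero]
      · rw [P_one, P_one, P_zero]
        simp only [Nat.cast_add, Nat.cast_one, map_add, map_one]
        ring
      · intro n
        exact P_rec p s n
    calc PowerSeries.mk (P (p + 1) s) * A s ^ (p + 1 + 1)
        = (PowerSeries.mk (P (p + 1) s) * A s) * A s ^ (p + 1) := by ring
      _ = PowerSeries.mk (P p s) * A s ^ (p + 1) := by rw [step]
      _ = 1 := ih

lemma prod_eq (m n k : ℕ) (hm : 1 ≤ m) (hk : k ≤ n) :
    ∏ j ∈ Finset.Icc 1 k, ((m:ℚ) + n - j) =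
      ((m + n - 1).factorial : ℚ) / (((m + n - 1 - k).factorial : ℕ) : ℚ) := by
  induction k with
  | zero =>
    simp only [Finset.Icc_eq_empty_of_lt (by omega : (0:ℕ) < 1), Finset.prod_empty,
      Nat.sub_zero]
    exact (div_self (Nat.cast_ne_zero.mpr (Nat.factorial_ne_zero _))).symm
  | succ k ih =>
    rw [Finset.prod_Icc_succ_top (by omega : 1 ≤ k + 1), ih (by omega)]
    obtain ⟨t, ht⟩ : ∃ t, m + n - 1 - (k + 1) = t := ⟨_, rfl⟩
    have ht2 : m + n = t + k + 2 := by omega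
    have hstep : m + n - 1 - k = t + 1 := by omega
    rw [ht, hstep, Nat.factorial_succ]
    have hc : ((t:ℚ) + 1) = (m:ℚ) + n - ((k:ℚ) + 1) := by
      have := congrArg (Nat.cast : ℕ → ℚ) ht2
      push_cast at this
      linarith
    push_cast
    rw [← hc]
    have f1 : ((t.factorial : ℕ) : ℚ) ≠ 0 := Nat.cast_ne_zero.mpr (Nat.factorial_ne_zero t)
    have f2 : ((t:ℚ) + 1) ≠ 0 := by positivity
    field_simp

lemma coeff_eq (m n k : ℕ) (hm : 1 ≤ m) (hk : 2 * k ≤ n) :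
    ((n + m - 1).choose (m - 1) : ℚ) *
      ((n.factorial : ℚ) / ((k.factorial : ℚ) * ((n - 2 * k).factorial : ℚ)) *
        (∏ j ∈ Finset.Icc 1 k, ((m:ℚ) + n - j))⁻¹) = (a (m - 1) n k : ℚ) := by
  rw [prod_eq m n k hm (by omega)]
  rw [show n + m - 1 = m + n - 1 from by omega]
  rw [Nat.cast_choose ℚ (show m - 1 ≤ m + n - 1 from by omega)]
  rw [show m + n - 1 - (m - 1) = n from by omega]
  rw [show (a (m - 1) n k : ℚ) =
      ((m - 1 + (n - k)).choose (n - k) : ℚ) * ((n - k).choose k : ℚ) from by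
    rw [a]; push_cast; ring]
  rw [show m - 1 + (n - k) = m + n - 1 - k from by omega]
  rw [Nat.cast_choose ℚ (show n - k ≤ m + n - 1 - k from by omega)]
  rw [show m + n - 1 - k - (n - k) = m - 1 from by omega]
  rw [Nat.cast_choose ℚ (show k ≤ n - k from by omega)]
  rw [show n - k - k = n - 2 * k from by omega]
  have f1 : ((m - 1).factorial : ℚ) ≠ 0 := Nat.cast_ne_zero.mpr (Nat.factorial_ne_zero _)
  have f2 : ((n : ℕ).factorial : ℚ) ≠ 0 := Nat.cast_ne_zero.mpr (Nat.factorial_ne_zero _)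
  have f3 : ((k : ℕ).factorial : ℚ) ≠ 0 := Nat.cast_ne_zero.mpr (Nat.factorial_ne_zero _)
  have f4 : ((n - 2 * k).factorial : ℚ) ≠ 0 := Nat.cast_ne_zero.mpr (Nat.factorial_ne_zero _)
  have f5 : ((m + n - 1).factorial : ℚ) ≠ 0 := Nat.cast_ne_zero.mpr (Nat.factorial_ne_zero _)
  have f6 : ((m + n - 1 - k).factorial : ℚ) ≠ 0 := Nat.cast_ne_zero.mpr (Nat.factorial_ne_zero _)
  have f7 : ((n - k).factorial : ℚ) ≠ 0 := Nat.cast_ne_zero.mpr (Nat.factorial_ne_zero _)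
  field_simp

lemma conv (m : ℕ) (hm : 1 ≤ m) (s : ℚ) (n : ℕ) :
    Polynomial.C (((n + m - 1).choose (m - 1) : ℚ)) * lpoly m s n = P (m - 1) s n := by
  rw [lpoly, P, Finset.mul_sum]
  rw [← Finset.sum_subset (show Finset.range (n / 2 + 1) ⊆ Finset.range (n + 1) from
    Finset.range_subset_range.mpr (by omega)) (fun k hk hk2 => by
      have : n < 2 * k := by
        simp only [Finset.mem_range] at hk hk2
        omega
      simp [a_zero_of_lt this])]
  refine Finset.sum_congr rfl fun k hk => ?_
  simp only [Finset.mem_range] at hk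
  have h2k : 2 * k ≤ n := by omega
  rw [← mul_assoc, ← Polynomial.C_mul]
  congr 2
  have h := coeff_eq m n k hm h2k
  calc ((n + m - 1).choose (m - 1) : ℚ) *
        ((n.factorial : ℚ) / ((k.factorial : ℚ) * ((n - 2 * k).factorial : ℚ)) *
          (∏ j ∈ Finset.Icc 1 k, ((m:ℚ) + n - j))⁻¹ * s ^ k)
      = (((n + m - 1).choose (m - 1) : ℚ) *
        ((n.factorial : ℚ) / ((k.factorial : ℚ) * ((n - 2 * k).factorial : ℚ)) *
          (∏ j ∈ Finset.Icc 1 k, ((m:ℚ) + n - j))⁻¹)) * s ^ k := by ring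
    _ = (a (m - 1) n k : ℚ) * s ^ k := by rw [h]

end SuperCatalanAux

theorem super_catalan_stmt10 (m : ℕ) (hm : 1 ≤ m) (s : ℚ) :
    (PowerSeries.mk fun n =>
        Polynomial.C (((n + m - 1).choose (m - 1) : ℚ)) * lpoly m s n :
      PowerSeries (Polynomial ℚ))
      * (1 - PowerSeries.C (R := Polynomial ℚ) Polynomial.X * PowerSeries.X
           - PowerSeries.C (R := Polynomial ℚ) (Polynomial.C s) * PowerSeries.X ^ 2) ^ m
      = 1 := by
  obtain ⟨p, rfl⟩ : ∃ p, m = p + 1 := ⟨m - 1, by omega⟩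
  have hc : (fun n => Polynomial.C (((n + (p + 1) - 1).choose (p + 1 - 1) : ℚ)) *
      lpoly (p + 1) s n) = SuperCatalanAux.P p s := by
    funext n
    have h := SuperCatalanAux.conv (p + 1) (by omega) s n
    simpa using h
  rw [hc]
  exact SuperCatalanAux.main p s
end

section
/- Define l_n(x,m,-1/4) = ∑_{k=0}^{⌊n/2⌋} (n!/(k!·(n-2k)!)) · (1/∏_{j=1}^{k}(m+n-j)) · (-1/4)^k · x^{n-2k} for m ≥ 1. Then l_n(1,m,-1/4) = ∏_{j=1}^{⌊n/2⌋} (2m+2j-1)/(2(m+j+⌊(n-1)/2⌋)), equivalently l_n(1,m,-1/4) = ((2m+1)(2m+2)···(2m+n-1)) / ((2m+2)(2m+4)···(2m+2n-2)). -/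
open Polynomial

lemma prod_shift (m n k : ℕ) :
    ∏ j ∈ Finset.Icc 1 (k+1), ((m:ℚ)+(n+1)-j) = ((m:ℚ)+n) * ∏ j ∈ Finset.Icc 1 k, ((m:ℚ)+n-j) := by
  induction k with
  | zero => simp; ring
  | succ k ih =>
    rw [Finset.prod_Icc_succ_top (by omega), ih, Finset.prod_Icc_succ_top (by omega)]
    push_cast
    ring

noncomputable def uu (m n k : ℕ) : ℚ :=
  if 2*k ≤ n then (n.factorial : ℚ) / ((k.factorial : ℚ) * ((n - 2*k).factorial : ℚ))
      * (∏ j ∈ Finset.Icc 1 k, ((m : ℚ) + (n : ℚ) - (j : ℚ)))⁻¹ * (-1/4 : ℚ)^k else 0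

lemma prod_pos (m n k : ℕ) (hm : 1 ≤ m) (hk : k ≤ n) :
    0 < ∏ j ∈ Finset.Icc 1 k, ((m:ℚ)+n-j) := by
  apply Finset.prod_pos
  intro j hj
  simp only [Finset.mem_Icc] at hj
  have h1 : (j:ℚ) ≤ n := by exact_mod_cast (hj.2.trans hk)
  have h2 : (1:ℚ) ≤ m := by exact_mod_cast hm
  linarith

lemma prod_shift' (m p k : ℕ) :
    ∏ j ∈ Finset.Icc 1 (k+1), ((m:ℚ)+((p+1:ℕ):ℚ)-j)
      = ((m:ℚ)+(p:ℚ)) * ∏ j ∈ Finset.Icc 1 k, ((m:ℚ)+(p:ℚ)-j) := by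
  rw [← prod_shift]
  apply Finset.prod_congr rfl
  intros
  push_cast
  ring

lemma uu_zero (m n k : ℕ) (h : n < 2*k) : uu m n k = 0 := if_neg (by omega)

lemma uu_val (m n k : ℕ) (h : 2*k ≤ n) :
    uu m n k = (n.factorial : ℚ) / ((k.factorial : ℚ) * ((n - 2*k).factorial : ℚ))
      * (∏ j ∈ Finset.Icc 1 k, ((m : ℚ) + (n : ℚ) - (j : ℚ)))⁻¹ * (-1/4 : ℚ)^k := if_pos h

set_option maxHeartbeats 2000000 in
lemma step (m n k : ℕ) (hm : 1 ≤ m) (hn : 1 ≤ n) :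
    ((n:ℚ) - 2*k) * uu m n k + 2*(k+1) * uu m n (k+1)
      = (n:ℚ) * ((2*(m:ℚ)+n-1)/(2*((m:ℚ)+n-1))) * uu m (n-1) k := by
  rcases Nat.lt_or_ge n (2*k) with h | h
  · -- all zero
    rw [uu_zero m n k (by omega), uu_zero m n (k+1) (by omega), uu_zero m (n-1) k (by omega)]
    ring
  rcases Nat.lt_or_ge n (2*k+1) with h2 | h2
  · -- n = 2k
    have hn2 : n = 2*k := by omega
    rw [uu_zero m n (k+1) (by omega), uu_zero m (n-1) k (by omega)]
    have h0 : ((n:ℚ) - 2*k) = 0 := by rw [hn2]; push_cast; ring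
    rw [h0]
    ring
  rcases Nat.lt_or_ge n (2*k+2) with h3 | h3
  · -- n = 2k+1
    have hn2 : n = 2*k+1 := by omega
    subst hn2
    rw [uu_val m (2*k+1) k (by omega), uu_zero m (2*k+1) (k+1) (by omega),
        uu_val m (2*k+1-1) k (by omega)]
    rw [show 2*k+1-1 = 2*k from by omega, show 2*k+1-2*k = 1 from by omega,
        show 2*k-2*k = 0 from by omega]
    have hs := prod_shift' m (2*k) k
    have hPP : ∏ j ∈ Finset.Icc 1 (k+1), ((m:ℚ)+((2*k+1:ℕ):ℚ)-j)
        = (∏ j ∈ Finset.Icc 1 k, ((m:ℚ)+((2*k+1:ℕ):ℚ)-j)) * ((m:ℚ)+((2*k+1:ℕ):ℚ)-((k+1:ℕ):ℚ)) :=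
      Finset.prod_Icc_succ_top (by omega) _
    have hc : (0:ℚ) < (m:ℚ)+((2*k+1:ℕ):ℚ)-((k+1:ℕ):ℚ) := by
      have h2 : (1:ℚ) ≤ m := by exact_mod_cast hm
      push_cast; linarith
    have hA : 0 < ∏ j ∈ Finset.Icc 1 k, ((m:ℚ)+((2*k:ℕ):ℚ)-j) :=
      prod_pos m (2*k) k hm (by omega)
    have hPeq : ∏ j ∈ Finset.Icc 1 k, ((m:ℚ)+((2*k+1:ℕ):ℚ)-j)
        = (((m:ℚ)+((2*k:ℕ):ℚ)) * ∏ j ∈ Finset.Icc 1 k, ((m:ℚ)+((2*k:ℕ):ℚ)-j))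
          / ((m:ℚ)+((2*k+1:ℕ):ℚ)-((k+1:ℕ):ℚ)) := by
      rw [eq_div_iff (ne_of_gt hc)]
      rw [hPP] at hs
      linarith [hs]
    rw [hPeq]
    have hf1 : ((2*k+1).factorial:ℚ) = (2*(k:ℚ)+1) * ((2*k).factorial:ℚ) := by
      rw [show 2*k+1 = (2*k)+1 from rfl, Nat.factorial_succ]; push_cast; ring
    rw [hf1, Nat.factorial_one, Nat.factorial_zero]
    have hm' : (1:ℚ) ≤ m := by exact_mod_cast hm
    have hfk : ((k.factorial:ℚ)) ≠ 0 := by exact_mod_cast (Nat.factorial_ne_zero k)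
    have hf2k : (((2*k).factorial:ℚ)) ≠ 0 := by exact_mod_cast (Nat.factorial_ne_zero (2*k))
    have hq : ((m:ℚ)+((2*k:ℕ):ℚ)) ≠ 0 := by push_cast; linarith
    set A := ∏ j ∈ Finset.Icc 1 k, ((m:ℚ)+((2*k:ℕ):ℚ)-j) with hAdef
    set S := ((-1/4:ℚ))^k with hSdef
    set Fk := ((k.factorial:ℚ)) with hFkdef
    set F2k := (((2*k).factorial:ℚ)) with hF2kdef
    have hA' : A ≠ 0 := ne_of_gt hA
    have hS : S ≠ 0 := by
      rw [hSdef]; exact pow_ne_zero _ (by norm_num)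
    have hc' : (m:ℚ)+((2*k+1:ℕ):ℚ)-((k+1:ℕ):ℚ) ≠ 0 := ne_of_gt hc
    push_cast
    push_cast at hq hc'
    have hFkpos : (0:ℚ) < Fk := by rw [hFkdef]; exact_mod_cast Nat.factorial_pos k
    have hden : (k:ℚ) * Fk * A * 4 + ↑m * Fk * A * 2 ≠ 0 := by
      have h9 : (k:ℚ) * Fk * A * 4 + ↑m * Fk * A * 2 = 2*(Fk*A)*(2*(k:ℚ)+↑m) := by ring
      rw [h9]
      have hk0 : (0:ℚ) ≤ (k:ℚ) := Nat.cast_nonneg k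
      positivity
    field_simp [hden]
    have hk0 : (0:ℚ) ≤ (k:ℚ) := Nat.cast_nonneg k
    rw [eq_div_iff (ne_of_gt (by linarith : (0:ℚ) < (m:ℚ)+(2*(k:ℚ)+1)-1))]
    ring
  · -- main case
    obtain ⟨a, rfl⟩ : ∃ a, n = a + 2*k + 2 := ⟨n - (2*k+2), by omega⟩
    rw [uu_val m (a+2*k+2) k (by omega), uu_val m (a+2*k+2) (k+1) (by omega),
        uu_val m (a+2*k+2-1) k (by omega)]
    rw [show a+2*k+2-1 = a+2*k+1 from by omega, show a+2*k+2-2*k = a+2 from by omega,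
        show a+2*k+2-2*(k+1) = a from by omega, show a+2*k+1-2*k = a+1 from by omega]
    have hs := prod_shift' m (a+2*k+1) k
    rw [show a+2*k+1+1 = a+2*k+2 from by omega] at hs
    have hPP : ∏ j ∈ Finset.Icc 1 (k+1), ((m:ℚ)+((a+2*k+2:ℕ):ℚ)-j)
        = (∏ j ∈ Finset.Icc 1 k, ((m:ℚ)+((a+2*k+2:ℕ):ℚ)-j)) * ((m:ℚ)+((a+2*k+2:ℕ):ℚ)-((k+1:ℕ):ℚ)) :=
      Finset.prod_Icc_succ_top (by omega) _
    have hc : (0:ℚ) < (m:ℚ)+((a+2*k+2:ℕ):ℚ)-((k+1:ℕ):ℚ) := by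
      have h2 : (1:ℚ) ≤ m := by exact_mod_cast hm
      push_cast; linarith
    have hA : 0 < ∏ j ∈ Finset.Icc 1 k, ((m:ℚ)+((a+2*k+1:ℕ):ℚ)-j) :=
      prod_pos m (a+2*k+1) k hm (by omega)
    rw [hs]
    have hPeq : ∏ j ∈ Finset.Icc 1 k, ((m:ℚ)+((a+2*k+2:ℕ):ℚ)-j)
        = (((m:ℚ)+((a+2*k+1:ℕ):ℚ)) * ∏ j ∈ Finset.Icc 1 k, ((m:ℚ)+((a+2*k+1:ℕ):ℚ)-j))
          / ((m:ℚ)+((a+2*k+2:ℕ):ℚ)-((k+1:ℕ):ℚ)) := by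
      rw [eq_div_iff (ne_of_gt hc)]
      rw [hPP] at hs
      linarith [hs]
    rw [hPeq]
    have hf1 : ((a+2*k+2).factorial:ℚ) = ((a:ℚ)+2*k+2) * ((a+2*k+1).factorial:ℚ) := by
      rw [show a+2*k+2 = (a+2*k+1)+1 from by omega, Nat.factorial_succ]; push_cast; ring
    have hf2 : ((a+2).factorial:ℚ) = ((a:ℚ)+2)*((a:ℚ)+1)*(a.factorial:ℚ) := by
      rw [show a+2 = (a+1)+1 from by omega, Nat.factorial_succ, Nat.factorial_succ]; push_cast; ring
    have hf3 : ((a+1).factorial:ℚ) = ((a:ℚ)+1)*(a.factorial:ℚ) := by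
      rw [Nat.factorial_succ]; push_cast; ring
    have hf4 : ((k+1).factorial:ℚ) = ((k:ℚ)+1)*(k.factorial:ℚ) := by
      rw [Nat.factorial_succ]; push_cast; ring
    rw [hf1, hf2, hf3, hf4, pow_succ]
    have hm' : (1:ℚ) ≤ m := by exact_mod_cast hm
    have hfk : ((k.factorial:ℚ)) ≠ 0 := by exact_mod_cast (Nat.factorial_ne_zero k)
    have hfa : ((a.factorial:ℚ)) ≠ 0 := by exact_mod_cast (Nat.factorial_ne_zero a)
    have hfb : (((a+2*k+1).factorial:ℚ)) ≠ 0 := by exact_mod_cast (Nat.factorial_ne_zero (a+2*k+1))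
    have hq : ((m:ℚ)+((a+2*k+1:ℕ):ℚ)) ≠ 0 := by push_cast; linarith
    set A := ∏ j ∈ Finset.Icc 1 k, ((m:ℚ)+((a+2*k+1:ℕ):ℚ)-j) with hAdef
    set S := ((-1/4:ℚ))^k with hSdef
    set Fk := ((k.factorial:ℚ)) with hFkdef
    set Fa := ((a.factorial:ℚ)) with hFadef
    set Fb := (((a+2*k+1).factorial:ℚ)) with hFbdef
    have hA' : A ≠ 0 := ne_of_gt hA
    have hS : S ≠ 0 := by
      rw [hSdef]; exact pow_ne_zero _ (by norm_num)
    have hc' : (m:ℚ)+((a+2*k+2:ℕ):ℚ)-((k+1:ℕ):ℚ) ≠ 0 := ne_of_gt hc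
    push_cast
    push_cast at hq hc'
    have hk0 : (0:ℚ) ≤ (k:ℚ) := Nat.cast_nonneg k
    have ha0 : (0:ℚ) ≤ (a:ℚ) := Nat.cast_nonneg a
    have hFkpos : (0:ℚ) < Fk := by rw [hFkdef]; exact_mod_cast Nat.factorial_pos k
    have hFapos : (0:ℚ) < Fa := by rw [hFadef]; exact_mod_cast Nat.factorial_pos a
    have hden : (a:ℚ) * ↑k * Fk * Fa * A * 4 + ↑a * ↑m * Fk * Fa * A * 2 + ↑a * Fk * Fa * A * 4
        + (a:ℚ) ^ 2 * Fk * Fa * A * 2 + ↑k * Fk * Fa * A * 4 + ↑m * Fk * Fa * A * 2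
        + Fk * Fa * A * 2 ≠ 0 := by
      rw [show (a:ℚ) * ↑k * Fk * Fa * A * 4 + ↑a * ↑m * Fk * Fa * A * 2 + ↑a * Fk * Fa * A * 4
        + (a:ℚ) ^ 2 * Fk * Fa * A * 2 + ↑k * Fk * Fa * A * 4 + ↑m * Fk * Fa * A * 2
        + Fk * Fa * A * 2
          = 2*(Fk*(Fa*A))*(((a:ℚ)+1)*((m:ℚ)+(a:ℚ)+2*(k:ℚ)+1)) from by ring]
      have : (0:ℚ) < (m:ℚ)+(a:ℚ)+2*(k:ℚ)+1 := by linarith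
      positivity
    field_simp [hden]
    have ha1 : ((a:ℚ)+1) ≠ 0 := by linarith
    rw [eq_div_iff]
    · ring
    · exact ne_of_gt (by linarith : (0:ℚ) < (m:ℚ)+((a:ℚ)+2*(k:ℚ)+2)-1)

noncomputable def Sval (m n : ℕ) : ℚ := ∑ k ∈ Finset.range (n/2+1), uu m n k

lemma sum_ext (m n N : ℕ) (hN : n/2+1 ≤ N) :
    ∑ k ∈ Finset.range N, uu m n k = Sval m n := by
  rw [Sval]
  exact (Finset.sum_subset (Finset.range_subset_range.mpr hN)
    (fun k hk hk2 => uu_zero m n k (by simp only [Finset.mem_range] at hk hk2; omega))).symm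

lemma Sval_rec (m n : ℕ) (hm : 1 ≤ m) (hn : 1 ≤ n) :
    Sval m n = (2*(m:ℚ)+n-1)/(2*((m:ℚ)+n-1)) * Sval m (n-1) := by
  set N := n/2+2 with hNdef
  have hsum : ∑ k ∈ Finset.range N, (((n:ℚ)-2*k) * uu m n k + 2*(k+1) * uu m n (k+1))
      = ∑ k ∈ Finset.range N, (n:ℚ) * ((2*(m:ℚ)+n-1)/(2*((m:ℚ)+n-1))) * uu m (n-1) k :=
    Finset.sum_congr rfl (fun k _ => step m n k hm hn)
  have hpt : ∀ k : ℕ, ((n:ℚ)-2*k) * uu m n k + 2*(k+1) * uu m n (k+1)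
      = (n:ℚ) * uu m n k + (2*(((k+1):ℕ):ℚ)*uu m n (k+1) - 2*(k:ℚ)*uu m n k) := by
    intro k; push_cast; ring
  have htel := Finset.sum_range_sub (fun k => 2*(k:ℚ)*uu m n k) N
  simp only [hpt] at hsum
  rw [Finset.sum_add_distrib, htel] at hsum
  rw [← Finset.mul_sum, ← Finset.mul_sum] at hsum
  rw [sum_ext m n N (by omega), sum_ext m (n-1) N (by omega)] at hsum
  have hzN : uu m n N = 0 := uu_zero m n N (by omega)
  rw [hzN] at hsum
  have hn0 : (n:ℚ) ≠ 0 := Nat.cast_ne_zero.mpr (by omega)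
  apply mul_left_cancel₀ hn0
  rw [← mul_assoc]
  simpa using hsum

lemma Sval_zero (m : ℕ) : Sval m 0 = 1 := by
  simp [Sval, uu]

lemma prod2_pos (m q : ℕ) : 0 < ∏ j ∈ Finset.Icc 1 q, (2*(m:ℚ)+2*j) := by
  apply Finset.prod_pos
  intro j hj
  simp only [Finset.mem_Icc] at hj
  have : (1:ℚ) ≤ j := by exact_mod_cast hj.1
  have : (0:ℚ) ≤ m := Nat.cast_nonneg m
  linarith

lemma Sval_prod2 (m : ℕ) (hm : 1 ≤ m) (n : ℕ) :
    Sval m n = (∏ j ∈ Finset.Icc 1 (n-1), (2*(m:ℚ)+j)) / ∏ j ∈ Finset.Icc 1 (n-1), (2*(m:ℚ)+2*j) := by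
  induction n with
  | zero => simp [Sval_zero]
  | succ n ih =>
    rw [Sval_rec m (n+1) hm (by omega)]
    simp only [Nat.add_sub_cancel]
    rw [ih]
    cases n with
    | zero =>
      have hm0 : (m:ℚ) ≠ 0 := Nat.cast_ne_zero.mpr (by omega)
      simp only [Nat.zero_sub, Finset.Icc_self]
      norm_num
      omega
    | succ p =>
      simp only [Nat.add_sub_cancel]
      rw [Finset.prod_Icc_succ_top (show 1 ≤ p+1 from by omega) (fun j => 2*(m:ℚ)+j),
          Finset.prod_Icc_succ_top (show 1 ≤ p+1 from by omega) (fun j => 2*(m:ℚ)+2*j)]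
      have h1 : (0:ℚ) < ∏ j ∈ Finset.Icc 1 p, (2*(m:ℚ)+2*j) := prod2_pos m p
      have hm' : (1:ℚ) ≤ m := by exact_mod_cast hm
      have hp0 : (0:ℚ) ≤ (p:ℚ) := Nat.cast_nonneg p
      have hA : (2*((m:ℚ)+((p+1+1:ℕ):ℚ)-1)) * ∏ j ∈ Finset.Icc 1 p, (2*(m:ℚ)+2*j) ≠ 0 := by
        apply mul_ne_zero _ (ne_of_gt h1)
        push_cast
        intro h; linarith
      have hB : (∏ j ∈ Finset.Icc 1 p, (2*(m:ℚ)+2*j)) * (2*(m:ℚ)+2*((p+1:ℕ):ℚ)) ≠ 0 := by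
        apply mul_ne_zero (ne_of_gt h1)
        push_cast
        intro h; linarith
      rw [div_mul_div_comm, div_eq_div_iff hA hB]
      push_cast
      ring

lemma tele (c : ℚ) (q : ℕ) :
    (∏ j ∈ Finset.Icc 1 q, (c + j)) * c = (∏ j ∈ Finset.Icc 1 q, (c + j - 1)) * (c + q) := by
  induction q with
  | zero => simp
  | succ q ih =>
    rw [Finset.prod_Icc_succ_top (by omega), Finset.prod_Icc_succ_top (by omega)]
    push_cast
    push_cast at ih
    linear_combination (c + (q:ℚ) + 1) * ih

lemma tele2 (m q : ℕ) (hq : 1 ≤ q) :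
    (∏ j ∈ Finset.Icc 1 q, (2*((m:ℚ)+(j:ℚ)+(q:ℚ)))) * ((m:ℚ)+(q:ℚ))
      = (∏ j ∈ Finset.Icc 1 q, (2*((m:ℚ)+(j:ℚ)+(((q-1):ℕ):ℚ)))) * ((m:ℚ)+2*(q:ℚ)) := by
  have h2q : ∏ _j ∈ Finset.Icc 1 q, (2:ℚ) = 2^q := by
    rw [Finset.prod_const, Nat.card_Icc]; norm_num
  have e2 : ∏ j ∈ Finset.Icc 1 q, (2*((m:ℚ)+(j:ℚ)+(q:ℚ)))
      = 2^q * ∏ j ∈ Finset.Icc 1 q, (((m:ℚ)+(q:ℚ))+(j:ℚ)) := by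
    rw [← h2q, ← Finset.prod_mul_distrib]
    exact Finset.prod_congr rfl (fun j _ => by ring)
  have e1 : ∏ j ∈ Finset.Icc 1 q, (2*((m:ℚ)+(j:ℚ)+(((q-1):ℕ):ℚ)))
      = 2^q * ∏ j ∈ Finset.Icc 1 q, (((m:ℚ)+(q:ℚ))+(j:ℚ)-1) := by
    have hc : (((q-1):ℕ):ℚ) = (q:ℚ)-1 := by
      rw [Nat.cast_sub hq]; norm_num
    rw [hc, ← h2q, ← Finset.prod_mul_distrib]
    exact Finset.prod_congr rfl (fun j _ => by ring)
  rw [e1, e2]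
  have ht := tele ((m:ℚ)+q) q
  linear_combination (2:ℚ)^q * ht

lemma prodD_pos (m p q : ℕ) : 0 < ∏ j ∈ Finset.Icc 1 q, (2*((m:ℚ)+(j:ℚ)+(p:ℚ))) := by
  apply Finset.prod_pos
  intro j hj
  simp only [Finset.mem_Icc] at hj
  have h1 : (1:ℚ) ≤ j := by exact_mod_cast hj.1
  have h2 : (0:ℚ) ≤ m := Nat.cast_nonneg m
  have h3 : (0:ℚ) ≤ p := Nat.cast_nonneg p
  linarith

lemma Sval_prod1 (m : ℕ) (hm : 1 ≤ m) (n : ℕ) :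
    Sval m n = ∏ j ∈ Finset.Icc 1 (n / 2),
        (2 * (m : ℚ) + 2 * j - 1) / (2 * ((m : ℚ) + (j : ℚ) + (((n - 1) / 2 : ℕ) : ℚ))) := by
  induction n with
  | zero => simp [Sval_zero]
  | succ n ih =>
    rw [Sval_rec m (n+1) hm (by omega), Nat.add_sub_cancel, ih]
    have hm' : (1:ℚ) ≤ m := by exact_mod_cast hm
    rcases Nat.even_or_odd n with he | ho
    · obtain ⟨q, rfl⟩ := he
      rcases Nat.eq_zero_or_pos q with rfl | hq
      · norm_num
        omega
      · rw [show (q+q+1)/2 = q from by omega, show (q+q)/2 = q from by omega,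
            show (q+q-1)/2 = q-1 from by omega]
        rw [Finset.prod_div_distrib, Finset.prod_div_distrib]
        have ht := tele2 m q hq
        have hD : (0:ℚ) < ∏ j ∈ Finset.Icc 1 q, (2*((m:ℚ)+(j:ℚ)+(q:ℚ))) := prodD_pos m q q
        have hD' : (0:ℚ) < ∏ j ∈ Finset.Icc 1 q, (2*((m:ℚ)+(j:ℚ)+(((q-1):ℕ):ℚ))) :=
          prodD_pos m (q-1) q
        have hq0 : (0:ℚ) ≤ (q:ℚ) := Nat.cast_nonneg q
        have hcast : ((q+q+1:ℕ):ℚ) = 2*(q:ℚ)+1 := by push_cast; ring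
        rw [hcast]
        have hcden : (2*((m:ℚ)+(2*(q:ℚ)+1)-1)) ≠ 0 := by intro h; linarith
        rw [div_mul_div_comm, div_eq_div_iff (mul_ne_zero hcden (ne_of_gt hD')) (ne_of_gt hD)]
        linear_combination (2 * ∏ j ∈ Finset.Icc 1 q, (2*(m:ℚ)+2*(j:ℚ)-1)) * ht
    · obtain ⟨q, rfl⟩ := ho
      rw [show (2*q+1+1)/2 = q+1 from by omega, show (2*q+1)/2 = q from by omega,
          show (2*q+1-1)/2 = q from by omega]
      rw [Finset.prod_Icc_succ_top (show 1 ≤ q+1 from by omega)]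
      rw [mul_comm]
      congr 1
      have hcast : ((2*q+1+1:ℕ):ℚ) = 2*(q:ℚ)+2 := by push_cast; ring
      rw [hcast]
      have h1 : 2*((m:ℚ)+(2*(q:ℚ)+2)-1) = 2*((m:ℚ)+((q+1:ℕ):ℚ)+(q:ℚ)) := by push_cast; ring
      have h2 : 2*(m:ℚ)+(2*(q:ℚ)+2)-1 = 2*(m:ℚ)+2*((q+1:ℕ):ℚ)-1 := by push_cast; ring
      rw [h1, h2]

lemma eval_lpoly (m n : ℕ) : Polynomial.eval 1 (lpoly m (-1/4) n) = Sval m n := by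
  rw [lpoly, Sval, Polynomial.eval_finset_sum]
  apply Finset.sum_congr rfl
  intro k hk
  simp only [Finset.mem_range] at hk
  rw [uu_val m n k (by omega)]
  simp

theorem super_catalan_stmt12 (m : ℕ) (hm : 1 ≤ m) (n : ℕ) :
    Polynomial.eval 1 (lpoly m (-1/4) n)
        = ∏ j ∈ Finset.Icc 1 (n / 2),
            (2 * (m : ℚ) + 2 * j - 1) / (2 * ((m : ℚ) + (j : ℚ) + (((n - 1) / 2 : ℕ) : ℚ))) ∧
    Polynomial.eval 1 (lpoly m (-1/4) n)
        = (∏ j ∈ Finset.Icc 1 (n - 1), (2 * (m : ℚ) + (j : ℚ)))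
            / ∏ j ∈ Finset.Icc 1 (n - 1), (2 * (m : ℚ) + 2 * (j : ℚ)) := by
  rw [eval_lpoly]
  exact ⟨Sval_prod1 m hm n, Sval_prod2 m hm n⟩
end

section
/- (q-analogue of the Vandermonde-type convolution) For all nonnegative integers n and ℓ: qBinom(2n+2ℓ, n+ℓ)/((-q;q)_{n+ℓ})² = qBinom(2n,n)·qBinom(2ℓ,ℓ)/((-q;q)_n²·(-q;q)_ℓ²) + ∑_{k=1}^{min(n,ℓ)} qBinom(2n, n-k)·qBinom(2ℓ, ℓ-k)·q^{2k²-k}·(1+q^{2k}) / ((-q;q)_{n-k}·(-q;q)_{n+k}·(-q;q)_{ℓ-k}·(-q;q)_{ℓ+k}), as an identity of rational functions in q. -/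
def qbinom {K : Type*} [CommRing K] (q : K) : ℕ → ℕ → K
  | _, 0 => 1
  | 0, _ + 1 => 0
  | n + 1, k + 1 => qbinom q n k + q ^ (k + 1) * qbinom q n (k + 1)

def qpoch {K : Type*} [CommRing K] (c q : K) (r : ℕ) : K :=
  ∏ j ∈ Finset.range r, (1 - c * q ^ j)

variable {K : Type*} [CommRing K] (q : K)

theorem qbinom_zero_right (n : ℕ) : qbinom q n 0 = 1 := by cases n <;> rfl

theorem qbinom_eq_zero : ∀ {n k : ℕ}, n < k → qbinom q n k = 0
  | 0, k+1, _ => rfl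
  | n+1, k+1, h => by
    rw [qbinom, qbinom_eq_zero (show n < k by omega),
      qbinom_eq_zero (show n < k+1 by omega)]; ring

theorem qbinom_self : ∀ n : ℕ, qbinom q n n = 1
  | 0 => rfl
  | n+1 => by
    rw [qbinom, qbinom_self n, qbinom_eq_zero q (n := n) (k := n+1) (by omega)]; ring

theorem map_qbinom {L : Type*} [CommRing L] (f : K →+* L) :
    ∀ n k : ℕ, f (qbinom q n k) = qbinom (f q) n k
  | _, 0 => by rw [qbinom_zero_right, qbinom_zero_right, map_one]
  | 0, k+1 => by rw [show qbinom q 0 (k+1) = 0 from rfl, map_zero]; rfl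
  | n+1, k+1 => by
    rw [qbinom, qbinom, map_add, map_mul, map_pow, map_qbinom f n k, map_qbinom f n (k+1)]

theorem map_qpoch {L : Type*} [CommRing L] (f : K →+* L) (c : K) (r : ℕ) :
    f (qpoch c q r) = qpoch (f c) (f q) r := by
  simp [qpoch, map_prod]

/-- Gauss binomial theorem. -/
theorem gauss : ∀ (N : ℕ) (z : K),
    ∏ j ∈ Finset.range N, (1 + z * q ^ j)
      = ∑ k ∈ Finset.range (N + 1), qbinom q N k * q ^ (k.choose 2) * z ^ k
  | 0, z => by simp [qbinom_zero_right]
  | N+1, z => by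
    have key : ∏ j ∈ Finset.range (N+1), (1 + z * q ^ j)
        = (1 + z) * ∏ j ∈ Finset.range N, (1 + (z * q) * q ^ j) := by
      rw [Finset.prod_range_succ', pow_zero, mul_one, mul_comm]
      congr 1
      exact Finset.prod_congr rfl fun j _ => by rw [pow_succ]; ring
    rw [key, gauss N (z*q)]
    have hch : ∀ k : ℕ, (k+1).choose 2 = k.choose 2 + k := fun k => by
      rw [Nat.choose_succ_succ, Nat.choose_one_right, Nat.add_comm]
    rw [Finset.sum_range_succ' (fun k => qbinom q (N+1) k * q ^ (k.choose 2) * z ^ k) (N+1)]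
    have e0 : qbinom q (N+1) 0 * q ^ (Nat.choose 0 2) * z ^ 0 = 1 := by
      rw [qbinom_zero_right]; norm_num
    rw [e0]
    have esplit : ∀ k ∈ Finset.range (N+1),
        qbinom q (N+1) (k+1) * q ^ ((k+1).choose 2) * z ^ (k+1)
          = qbinom q N k * q ^ ((k+1).choose 2) * z ^ (k+1)
            + q ^ (k+1) * qbinom q N (k+1) * q ^ ((k+1).choose 2) * z ^ (k+1) := by
      intro k _
      rw [qbinom]; ring
    have hA : ∀ k ∈ Finset.range (N+1),
        z * (qbinom q N k * q ^ (k.choose 2) * (z*q) ^ k)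
          = qbinom q N k * q ^ ((k+1).choose 2) * z ^ (k+1) := by
      intro k _
      rw [hch k, pow_add, mul_pow]; ring
    have hB : ∑ k ∈ Finset.range (N+1), qbinom q N k * q ^ (k.choose 2) * (z*q) ^ k
        = 1 + ∑ k ∈ Finset.range (N+1),
            q ^ (k+1) * qbinom q N (k+1) * q ^ ((k+1).choose 2) * z ^ (k+1) := by
      rw [Finset.sum_range_succ'
        (fun k => qbinom q N k * q ^ (k.choose 2) * (z*q) ^ k) N]
      rw [Finset.sum_range_succ
        (fun k => q ^ (k+1) * qbinom q N (k+1) * q ^ ((k+1).choose 2) * z ^ (k+1)) N]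
      rw [qbinom_eq_zero q (n := N) (k := N+1) (by omega)]
      simp only [qbinom_zero_right, Nat.choose_self]
      rw [add_comm]
      congr 1
      · norm_num
      · rw [show q ^ (N + 1) * 0 * q ^ ((N+1).choose 2) * z ^ (N + 1) = 0 by ring, add_zero]
        exact Finset.sum_congr rfl fun k _ => by rw [mul_pow]; ring
    calc (1 + z) * ∑ k ∈ Finset.range (N+1), qbinom q N k * q ^ (k.choose 2) * (z*q) ^ k
        = (∑ k ∈ Finset.range (N+1), qbinom q N k * q ^ (k.choose 2) * (z*q) ^ k)
          + ∑ k ∈ Finset.range (N+1),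
              z * (qbinom q N k * q ^ (k.choose 2) * (z*q) ^ k) := by
          rw [add_mul, one_mul, Finset.mul_sum]
      _ = (1 + ∑ k ∈ Finset.range (N+1),
              q ^ (k+1) * qbinom q N (k+1) * q ^ ((k+1).choose 2) * z ^ (k+1))
          + ∑ k ∈ Finset.range (N+1),
              qbinom q N k * q ^ ((k+1).choose 2) * z ^ (k+1) := by
          rw [hB, Finset.sum_congr rfl hA]
      _ = (∑ k ∈ Finset.range (N+1),
            (qbinom q N k * q ^ ((k+1).choose 2) * z ^ (k+1)
              + q ^ (k+1) * qbinom q N (k+1) * q ^ ((k+1).choose 2) * z ^ (k+1))) + 1 := by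
          rw [Finset.sum_add_distrib]; ring
      _ = (∑ k ∈ Finset.range (N+1),
            qbinom q (N+1) (k+1) * q ^ ((k+1).choose 2) * z ^ (k+1)) + 1 := by
          exact congrArg (· + 1) (Finset.sum_congr rfl fun k hk => (esplit k hk).symm)

/-- Even/odd split of the q-product. -/
theorem split (N : ℕ) (z : K) :
    ∏ j ∈ Finset.range (2*N), (1 + z * q ^ j)
      = (∏ j ∈ Finset.range N, (1 + z * (q^2) ^ j))
        * ∏ j ∈ Finset.range N, (1 + (z * q) * (q^2) ^ j) := by
  induction N with
  | zero => simp
  | succ N ih =>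
    have h2 : 2 * (N + 1) = 2 * N + 1 + 1 := by ring
    rw [h2, Finset.prod_range_succ, Finset.prod_range_succ, Finset.prod_range_succ,
      Finset.prod_range_succ, ih]
    have e1 : (q:K)^(2*N) = (q^2)^N := by rw [← pow_mul]
    have e2 : (q:K)^(2*N+1) = q * (q^2)^N := by rw [pow_succ']; rw [e1]
    rw [e1, e2]; ring

theorem coeff_sum_C_mul_X_pow (a : ℕ → K) (m t : ℕ) :
    (∑ k ∈ Finset.range m, Polynomial.C (a k) * Polynomial.X ^ k).coeff t
      = if t < m then a t else 0 := by
  rw [Polynomial.finset_sum_coeff]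
  simp only [Polynomial.coeff_C_mul, Polynomial.coeff_X_pow, mul_ite, mul_one, mul_zero]
  rw [Finset.sum_ite_eq (Finset.range m) t a]
  simp [Finset.mem_range]

theorem gauss_poly (N : ℕ) (w : K) :
    ∏ j ∈ Finset.range N, (1 + (Polynomial.X * Polynomial.C w) * Polynomial.C q ^ j)
      = ∑ k ∈ Finset.range (N+1),
          Polynomial.C (qbinom q N k * q ^ (k.choose 2) * w ^ k) * Polynomial.X ^ k := by
  rw [gauss (Polynomial.C q) N (Polynomial.X * Polynomial.C w)]
  refine Finset.sum_congr rfl fun k _ => ?_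
  rw [← map_pow, ← map_qbinom q Polynomial.C, mul_pow, ← map_pow]
  simp only [map_mul]
  ring

theorem gauss_polyX (N : ℕ) :
    ∏ j ∈ Finset.range N, (1 + Polynomial.X * Polynomial.C q ^ j)
      = ∑ k ∈ Finset.range (N+1),
          Polynomial.C (qbinom q N k * q ^ (k.choose 2)) * Polynomial.X ^ k := by
  rw [gauss (Polynomial.C q) N Polynomial.X]
  refine Finset.sum_congr rfl fun k _ => ?_
  rw [← map_qbinom q Polynomial.C, ← map_pow, ← map_mul]

/-- The core convolution identity. -/
theorem core (N n : ℕ) (hn : n ≤ N) :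
    qbinom q (2*N) (2*n) * q ^ ((2*n).choose 2)
      = ∑ p ∈ Finset.HasAntidiagonal.antidiagonal (2*n),
          (qbinom (q^2) N p.1 * (q^2) ^ (p.1.choose 2))
            * (qbinom (q^2) N p.2 * (q^2) ^ (p.2.choose 2) * q ^ p.2) := by
  have hs : (∏ j ∈ Finset.range (2*N), (1 + Polynomial.X * Polynomial.C q ^ j))
      = (∏ j ∈ Finset.range N, (1 + Polynomial.X * Polynomial.C (q^2) ^ j))
        * ∏ j ∈ Finset.range N,
            (1 + (Polynomial.X * Polynomial.C q) * Polynomial.C (q^2) ^ j) := by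
    rw [split (Polynomial.C q) N Polynomial.X, map_pow]
  have e1 : (∏ j ∈ Finset.range (2*N),
        (1 + Polynomial.X * Polynomial.C q ^ j)).coeff (2*n)
      = qbinom q (2*N) (2*n) * q ^ ((2*n).choose 2) := by
    rw [gauss_polyX q (2*N), coeff_sum_C_mul_X_pow, if_pos (by omega)]
  rw [← e1, hs, gauss_polyX (q^2) N, gauss_poly (q^2) N q, Polynomial.coeff_mul]
  refine Finset.sum_congr rfl fun p hp => ?_
  rw [coeff_sum_C_mul_X_pow, coeff_sum_C_mul_X_pow]
  by_cases h1 : p.1 < N + 1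
  · by_cases h2 : p.2 < N + 1
    · rw [if_pos h1, if_pos h2]
    · rw [if_neg h2, qbinom_eq_zero (q^2) (show N < p.2 by omega)]; ring
  · rw [if_neg h1, qbinom_eq_zero (q^2) (show N < p.1 by omega)]; ring

theorem sum_Icc_split (F : ℕ → K) : ∀ (m : ℕ) {n : ℕ}, m ≤ n →
    ∑ i ∈ Finset.Icc (n-m) (n+m), F i
      = F n + ∑ k ∈ Finset.Icc 1 m, (F (n-k) + F (n+k))
  | 0, n, _ => by simp
  | m+1, n, h => by
    have hins : Finset.Icc (n-(m+1)) (n+(m+1))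
        = insert (n-(m+1)) (insert (n+(m+1)) (Finset.Icc (n-m) (n+m))) := by
      ext i
      simp only [Finset.mem_Icc, Finset.mem_insert]
      omega
    rw [hins, Finset.sum_insert (by simp only [Finset.mem_Icc, Finset.mem_insert]; omega),
      Finset.sum_insert (by simp only [Finset.mem_Icc]; omega),
      sum_Icc_split F m (by omega), Finset.sum_Icc_succ_top (by omega : 1 ≤ m+1)]
    ring

theorem hT : ∀ i : ℕ, 2 * i.choose 2 + i = i * i
  | 0 => rfl
  | i+1 => by
    rw [Nat.choose_succ_succ, Nat.choose_one_right]
    have := hT i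
    nlinarith [this]

theorem hkk (k : ℕ) : k ≤ 2 * k^2 := by
  rcases Nat.eq_zero_or_pos k with h | h
  · simp [h]
  · calc k = k * 1 := (mul_one k).symm
      _ ≤ k * k := Nat.mul_le_mul_left k h
      _ ≤ k * k + k * k := Nat.le_add_right _ _
      _ = 2 * k^2 := by ring

def Gfun {K : Type*} [CommRing K] (q : K) (N n i : ℕ) : K :=
  qbinom (q^2) N i * (q^2) ^ (i.choose 2)
    * (qbinom (q^2) N (2*n - i) * (q^2) ^ ((2*n - i).choose 2) * q ^ (2*n - i))

theorem core_k (n l : ℕ) :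
    qbinom q (2*(n+l)) (2*n) * q ^ ((2*n).choose 2)
      = q ^ ((2*n).choose 2)
        * (qbinom (q^2) (n+l) n ^ 2
          + ∑ k ∈ Finset.Icc 1 (min n l),
              qbinom (q^2) (n+l) (n-k) * qbinom (q^2) (n+l) (n+k)
                * (q ^ (2*k^2 - k) * (1 + q ^ (2*k)))) := by
  have m_le_n : min n l ≤ n := min_le_left n l
  rw [core q (n+l) n (Nat.le_add_right n l),
    Finset.Nat.sum_antidiagonal_eq_sum_range_succ_mk]
  have h0 : ∑ i ∈ Finset.range (2*n+1),
      (qbinom (q^2) (n+l) (i, 2*n - i).1 * (q^2) ^ ((i, 2*n - i).1.choose 2))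
        * (qbinom (q^2) (n+l) (i, 2*n - i).2 * (q^2) ^ ((i, 2*n - i).2.choose 2)
            * q ^ (i, 2*n - i).2)
      = ∑ i ∈ Finset.range (2*n+1), Gfun q (n+l) n i :=
    Finset.sum_congr rfl fun i _ => rfl
  rw [h0]
  have hsub : Finset.Icc (n - min n l) (n + min n l) ⊆ Finset.range (2*n+1) := by
    intro i hi
    simp only [Finset.mem_Icc] at hi
    simp only [Finset.mem_range]
    omega
  have hz : ∀ i ∈ Finset.range (2*n+1),
      i ∉ Finset.Icc (n - min n l) (n + min n l) → Gfun q (n+l) n i = 0 := by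
    intro i hi hni
    simp only [Finset.mem_range] at hi
    simp only [Finset.mem_Icc, not_and_or, not_le] at hni
    rcases le_total n l with hnl | hnl
    · exfalso
      have : min n l = n := min_eq_left hnl
      omega
    · have hml : min n l = l := min_eq_right hnl
      rcases hni with h' | h'
      · have hlt : n + l < 2*n - i := by omega
        unfold Gfun
        rw [qbinom_eq_zero (q^2) hlt]; ring
      · have hlt : n + l < i := by omega
        unfold Gfun
        rw [qbinom_eq_zero (q^2) hlt]; ring
  rw [← Finset.sum_subset hsub hz, sum_Icc_split (Gfun q (n+l) n) (min n l) m_le_n]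
  have hcent : Gfun q (n+l) n n = q ^ ((2*n).choose 2) * qbinom (q^2) (n+l) n ^ 2 := by
    have hE : (2*n).choose 2 = 2*(n.choose 2) + (2*(n.choose 2) + n) := by
      linarith [hT n, hT (2*n)]
    unfold Gfun
    rw [show 2*n - n = n from by omega]
    simp only [← pow_mul]
    rw [hE, pow_add, pow_add]
    ring
  have hterm : ∀ k ∈ Finset.Icc 1 (min n l),
      Gfun q (n+l) n (n-k) + Gfun q (n+l) n (n+k)
        = q ^ ((2*n).choose 2)
            * (qbinom (q^2) (n+l) (n-k) * qbinom (q^2) (n+l) (n+k)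
                * (q ^ (2*k^2 - k) * (1 + q ^ (2*k)))) := by
    intro k hk
    simp only [Finset.mem_Icc] at hk
    have hkn : k ≤ n := le_trans hk.2 m_le_n
    obtain ⟨d, rfl⟩ := Nat.exists_eq_add_of_le hkn
    have i1 : k + d - k = d := by omega
    have i2 : 2*(k+d) - d = k+d+k := by omega
    have i3 : 2*(k+d) - (k+d+k) = d := by omega
    unfold Gfun
    rw [i1, i2, i3]
    simp only [← pow_mul]
    have z1 : (2:ℤ)*((k+d+k).choose 2) + (k+d+k) = (k+d+k)*(k+d+k) := by
      exact_mod_cast hT (k+d+k)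
    have z2 : (2:ℤ)*(d.choose 2) + d = d*d := by exact_mod_cast hT d
    have z3 : (2:ℤ)*((2*(k+d)).choose 2) + 2*(k+d) = (2*(k+d))*(2*(k+d)) := by
      exact_mod_cast hT (2*(k+d))
    have e1 : 2*(d.choose 2) + (2*((k+d+k).choose 2) + (k+d+k))
        = (2*(k+d)).choose 2 + ((2*k^2 - k) + 2*k) := by
      zify [hkk k]
      linarith [z1, z2, z3]
    have e2 : 2*((k+d+k).choose 2) + (2*(d.choose 2) + d)
        = (2*(k+d)).choose 2 + (2*k^2 - k) := by
      zify [hkk k]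
      linarith [z1, z2, z3]
    have p1 : q^(2*(d.choose 2)) * (q^(2*((k+d+k).choose 2)) * q^(k+d+k))
        = q^((2*(k+d)).choose 2) * (q^(2*k^2 - k) * q^(2*k)) := by
      rw [← pow_add, ← pow_add, e1, pow_add, pow_add]
    have p2 : q^(2*((k+d+k).choose 2)) * (q^(2*(d.choose 2)) * q^d)
        = q^((2*(k+d)).choose 2) * q^(2*k^2 - k) := by
      rw [← pow_add, ← pow_add, e2, pow_add]
    linear_combination (qbinom (q^2) (k+d+l) d * qbinom (q^2) (k+d+l) (k+d+k)) * (p1 + p2)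
  rw [hcent, Finset.sum_congr rfl hterm, mul_add, Finset.mul_sum]

theorem qpoch_succ (c : K) (r : ℕ) :
    qpoch c q (r+1) = qpoch c q r * (1 - c * q ^ r) := Finset.prod_range_succ _ r

theorem qpoch_zero (c : K) : qpoch c q 0 = 1 := rfl

theorem qbinom_fact : ∀ (n k : ℕ), k ≤ n →
    qbinom q n k * (qpoch q q k * qpoch q q (n-k)) = qpoch q q n := by
  intro n
  induction n with
  | zero =>
    intro k hk
    interval_cases k
    simp [qbinom_zero_right, qpoch_zero]
  | succ n ih =>
    intro k hk
    match k with
    | 0 => simp [qbinom_zero_right, qpoch_zero]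
    | k+1 =>
      rcases Nat.lt_or_ge k n with hlt | hge
      · obtain ⟨d, rfl⟩ := Nat.exists_eq_add_of_lt hlt
        have IH1 := ih k (by omega)
        have IH2 := ih (k+1) (by omega)
        rw [show k + d + 1 - k = d + 1 from by omega] at IH1
        rw [show k + d + 1 - (k+1) = d from by omega] at IH2
        rw [show k + d + 1 + 1 - (k+1) = d + 1 from by omega]
        rw [qbinom, qpoch_succ q q (k+d+1), qpoch_succ q q k, qpoch_succ q q d]
        rw [qpoch_succ q q d] at IH1
        rw [qpoch_succ q q k] at IH2
        linear_combination (1 - q*q^k) * IH1 + q^(k+1)*(1 - q*q^d) * IH2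
      · have hkn : k = n := by omega
        subst hkn
        rw [show k + 1 - (k+1) = 0 from by omega, qbinom_self, qpoch_zero]
        ring

theorem qpoch_neg_mul (r : ℕ) :
    qpoch (-q) q r * qpoch q q r = qpoch (q^2) (q^2) r := by
  unfold qpoch
  rw [← Finset.prod_mul_distrib]
  refine Finset.prod_congr rfl fun j _ => ?_
  rw [← pow_mul, pow_mul']
  ring

noncomputable abbrev Kq : Type := RatFunc ℚ

noncomputable def qv : Kq := RatFunc.X

theorem qpoch_alg_ne_zero (p s : Polynomial ℚ) (hp : Polynomial.eval 0 p = 0) (r : ℕ) :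
    qpoch (algebraMap (Polynomial ℚ) Kq p) (algebraMap (Polynomial ℚ) Kq s) r ≠ 0 := by
  rw [← map_qpoch]
  apply RatFunc.algebraMap_ne_zero
  intro h
  have h3 := map_qpoch s (Polynomial.evalRingHom (0:ℚ)) p r
  rw [h, map_zero] at h3
  simp only [Polynomial.coe_evalRingHom, hp] at h3
  simp [qpoch] at h3

theorem P_ne (r : ℕ) : qpoch qv qv r ≠ 0 := by
  rw [qv, ← RatFunc.algebraMap_X]
  exact qpoch_alg_ne_zero _ _ (by simp) r

theorem M_ne (r : ℕ) : qpoch (-1 * qv) qv r ≠ 0 := by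
  rw [qv, ← RatFunc.algebraMap_X, show (-1 : Kq) * algebraMap (Polynomial ℚ) Kq Polynomial.X
      = algebraMap (Polynomial ℚ) Kq (-Polynomial.X) from by rw [map_neg]; ring]
  exact qpoch_alg_ne_zero _ _ (by simp) r

theorem MP_eq (r : ℕ) :
    qpoch (-1 * qv) qv r * qpoch qv qv r = qpoch (qv^2) (qv^2) r := by
  rw [neg_one_mul]
  exact qpoch_neg_mul qv r

theorem D_ne (r : ℕ) : qpoch (qv^2) (qv^2) r ≠ 0 := by
  rw [← MP_eq]
  exact mul_ne_zero (M_ne r) (P_ne r)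

theorem qbinom_qv_div {a b : ℕ} (h : b ≤ a) :
    qbinom qv a b = qpoch qv qv a / (qpoch qv qv b * qpoch qv qv (a-b)) :=
  ((eq_div_iff (mul_ne_zero (P_ne b) (P_ne (a-b)))).mpr (qbinom_fact qv a b h)).symm
    |>.symm

theorem qbinom_qv2_div {a b : ℕ} (h : b ≤ a) :
    qbinom (qv^2) a b
      = qpoch (qv^2) (qv^2) a / (qpoch (qv^2) (qv^2) b * qpoch (qv^2) (qv^2) (a-b)) :=
  (eq_div_iff (mul_ne_zero (D_ne b) (D_ne (a-b)))).mpr (qbinom_fact (qv^2) a b h)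

set_option maxHeartbeats 1000000 in
theorem super_catalan_stmt14 (n l : ℕ) :
    qbinom qv (2 * n + 2 * l) (n + l) / (qpoch (-1 * qv) qv (n + l)) ^ 2
      = qbinom qv (2 * n) n * qbinom qv (2 * l) l
          / ((qpoch (-1 * qv) qv n) ^ 2 * (qpoch (-1 * qv) qv l) ^ 2)
        + ∑ k ∈ Finset.Icc 1 (min n l),
            qbinom qv (2 * n) (n - k) * qbinom qv (2 * l) (l - k)
              * qv ^ (2 * k ^ 2 - k) * (1 + qv ^ (2 * k))
              / (qpoch (-1 * qv) qv (n - k) * qpoch (-1 * qv) qv (n + k)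
                  * qpoch (-1 * qv) qv (l - k) * qpoch (-1 * qv) qv (l + k)) := by
  have hq : (qv : Kq) ≠ 0 := by rw [qv]; exact RatFunc.X_ne_zero
  have hP := P_ne
  have hM : ∀ r, qpoch (-qv) qv r ≠ 0 := fun r => by
    rw [← neg_one_mul]; exact M_ne r
  have hD := D_ne
  have hcore := core_k qv n l
  have hE0 : (qv : Kq) ^ ((2*n).choose 2) ≠ 0 := pow_ne_zero _ hq
  rw [mul_comm] at hcore
  have hcore' := mul_left_cancel₀ hE0 hcore
  rw [show 2*n+2*l = 2*(n+l) from by ring]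
  have key : qbinom qv (2*(n+l)) (n+l) / (qpoch (-1*qv) qv (n+l))^2
      = qbinom qv (2*(n+l)) (2*n)
        * (qpoch qv qv (2*n) * qpoch qv qv (2*l) / (qpoch (qv^2) (qv^2) (n+l))^2) := by
    rw [qbinom_qv_div (show n+l ≤ 2*(n+l) by omega),
      qbinom_qv_div (show 2*n ≤ 2*(n+l) by omega),
      show 2*(n+l) - (n+l) = n+l from by omega,
      show 2*(n+l) - 2*n = 2*l from by omega, ← MP_eq (n+l)]
    field_simp [hP, hM]
  rw [key, hcore', add_mul, Finset.sum_mul]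
  congr 1
  · rw [qbinom_qv_div (show n ≤ 2*n by omega), qbinom_qv_div (show l ≤ 2*l by omega),
      show 2*n - n = n from by omega, show 2*l - l = l from by omega,
      qbinom_qv2_div (show n ≤ n+l by omega), show n+l-n = l from by omega,
      ← MP_eq n, ← MP_eq l]
    field_simp [hP, hM, hD]
  · refine Finset.sum_congr rfl fun k hk => ?_
    simp only [Finset.mem_Icc] at hk
    have hkn : k ≤ n := le_trans hk.2 (min_le_left n l)
    have hkl : k ≤ l := le_trans hk.2 (min_le_right n l)
    rw [qbinom_qv_div (show n-k ≤ 2*n by omega), show 2*n - (n-k) = n+k from by omega,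
      qbinom_qv_div (show l-k ≤ 2*l by omega), show 2*l - (l-k) = l+k from by omega,
      qbinom_qv2_div (show n-k ≤ n+l by omega), show n+l-(n-k) = l+k from by omega,
      qbinom_qv2_div (show n+k ≤ n+l by omega), show n+l-(n+k) = l-k from by omega]
    have hshape : ∀ (DD X Y W U : Kq), DD ≠ 0 → X ≠ 0 → Y ≠ 0 →
        DD / X * (DD / Y) * W * (U / DD^2) = U * W / (X * Y) := by
      intro DD X Y W U h1 h2 h3
      field_simp
    rw [hshape _ _ _ _ _ (hD (n+l))
      (mul_ne_zero (hD (n-k)) (hD (l+k))) (mul_ne_zero (hD (n+k)) (hD (l-k)))]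
    have hshape2 : ∀ (A X B Y W1 W2 Z : Kq),
        A / X * (B / Y) * W1 * W2 / Z = A * B * W1 * W2 / (X * Y * Z) := by
      intro A X B Y W1 W2 Z
      rw [div_mul_div_comm, div_mul_eq_mul_div, div_mul_eq_mul_div, div_div]
    rw [hshape2]
    rw [div_eq_div_iff
      (mul_ne_zero (mul_ne_zero (hD (n-k)) (hD (l+k)))
        (mul_ne_zero (hD (n+k)) (hD (l-k))))
      (mul_ne_zero (mul_ne_zero (mul_ne_zero (hP (n-k)) (hP (n+k)))
          (mul_ne_zero (hP (l-k)) (hP (l+k))))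
        (mul_ne_zero (mul_ne_zero (mul_ne_zero (M_ne (n-k)) (M_ne (n+k))) (M_ne (l-k)))
          (M_ne (l+k))))]
    rw [← MP_eq (n-k), ← MP_eq (n+k), ← MP_eq (l-k), ← MP_eq (l+k)]
    ring
end

section
/- For every positive integer m and all nonnegative integers n, j with 2j ≤ n: ∑_{k=2j}^{n} (-1)^k · (2m+n-1)!·(n-2j)!·(m+k-j-1)! / ((n-k)!·(2m+k-1)!·(k-2j)!·(m+n-j-1)!) = 1, as rational numbers. -/
open Finset in
private 
lemma pascal_sum (f : ℕ → ℚ) (N : ℕ) :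
    ∑ i ∈ range (N+2), (-1:ℚ)^i * ((N+1).choose i) * f i
      = ∑ i ∈ range (N+1), (-1:ℚ)^i * (N.choose i) * f i
        - ∑ i ∈ range (N+1), (-1:ℚ)^i * (N.choose i) * f (i+1) := by
  rw [Finset.sum_range_succ' _ (N+1),
      Finset.sum_range_succ' (fun i => (-1:ℚ)^i * (N.choose i) * f i) N]
  have h1 : ∀ i ∈ range (N+1), (-1:ℚ)^(i+1) * (((N+1).choose (i+1) : ℕ) : ℚ) * f (i+1)
      = -((-1:ℚ)^i * (N.choose i) * f (i+1)) - (-1:ℚ)^i * (N.choose (i+1)) * f (i+1) := by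
    intro i _
    rw [Nat.choose_succ_succ]
    push_cast
    ring
  rw [Finset.sum_congr rfl h1, Finset.sum_sub_distrib, Finset.sum_neg_distrib]
  have h2 : ∑ i ∈ range (N+1), (-1:ℚ)^i * (N.choose (i+1)) * f (i+1)
      = ∑ i ∈ range N, (-1:ℚ)^i * (N.choose (i+1)) * f (i+1) := by
    rw [Finset.sum_range_succ, Nat.choose_succ_self]
    simp
  rw [h2]
  have h3 : ∑ x ∈ range N, (-1:ℚ)^(x+1) * (N.choose (x+1)) * f (x+1)
      = -∑ x ∈ range N, (-1:ℚ)^x * (N.choose (x+1)) * f (x+1) := by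
    rw [← Finset.sum_neg_distrib]
    exact Finset.sum_congr rfl (fun i _ => by ring)
  rw [h3]
  simp only [Nat.choose_zero_right]
  ring

open Finset in
private lemma key (b : ℕ) : ∀ N a : ℕ,
    ∑ i ∈ range (N+1), (-1:ℚ)^i * (N.choose i) * ((a+i).factorial : ℚ) / ((a+b+1+i).factorial : ℚ)
      = ((a.factorial : ℚ) * ((b+N).factorial : ℚ))
        / ((b.factorial : ℚ) * ((a+b+1+N).factorial : ℚ)) := by
  intro N
  induction N with
  | zero =>
    intro a
    simp
    have hb : (b.factorial : ℚ) ≠ 0 := Nat.cast_ne_zero.2 (Nat.factorial_ne_zero b)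
    have h : ((a+b+1).factorial : ℚ) ≠ 0 := Nat.cast_ne_zero.2 (Nat.factorial_ne_zero _)
    field_simp
  | succ N ih =>
    intro a
    have hps := pascal_sum (fun i => ((a+i).factorial : ℚ) / ((a+b+1+i).factorial : ℚ)) N
    have hL : ∑ i ∈ range (N+1+1), (-1:ℚ)^i * ((N+1).choose i) * ((a+i).factorial : ℚ)
        / ((a+b+1+i).factorial : ℚ)
        = ∑ i ∈ range (N+2), (-1:ℚ)^i * ((N+1).choose i)
            * (((a+i).factorial : ℚ) / ((a+b+1+i).factorial : ℚ)) := by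
      exact Finset.sum_congr rfl (fun i _ => by ring)
    rw [hL, hps]
    have e1 : ∑ i ∈ range (N+1), (-1:ℚ)^i * (N.choose i)
        * (((a+i).factorial : ℚ) / ((a+b+1+i).factorial : ℚ))
        = ((a.factorial : ℚ) * ((b+N).factorial : ℚ))
          / ((b.factorial : ℚ) * ((a+b+1+N).factorial : ℚ)) := by
      rw [← ih a]
      exact Finset.sum_congr rfl (fun i _ => by ring)
    have e2 : ∑ i ∈ range (N+1), (-1:ℚ)^i * (N.choose i)
        * (((a+(i+1)).factorial : ℚ) / ((a+b+1+(i+1)).factorial : ℚ))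
        = (((a+1).factorial : ℚ) * ((b+N).factorial : ℚ))
          / ((b.factorial : ℚ) * ((a+1+b+1+N).factorial : ℚ)) := by
      rw [← ih (a+1)]
      refine Finset.sum_congr rfl (fun i _ => ?_)
      have h1 : a + (i+1) = a + 1 + i := by ring
      have h2 : a + b + 1 + (i+1) = a + 1 + b + 1 + i := by ring
      rw [h1, h2]
      ring
    rw [e1, e2]
    have h5 : a + b + 1 + (N+1) = a + b + 1 + N + 1 := by omega
    rw [h5]
    have h3 : a + 1 + b + 1 + N = a + b + 1 + N + 1 := by ring
    have h4 : b + (N+1) = b + N + 1 := by ring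
    rw [h3, h4, Nat.factorial_succ (a+b+1+N), Nat.factorial_succ (b+N), Nat.factorial_succ a]
    have hb : (b.factorial : ℚ) ≠ 0 := Nat.cast_ne_zero.2 (Nat.factorial_ne_zero b)
    have hbn : ((b+N).factorial : ℚ) ≠ 0 := Nat.cast_ne_zero.2 (Nat.factorial_ne_zero _)
    have habn : ((a+b+1+N).factorial : ℚ) ≠ 0 := Nat.cast_ne_zero.2 (Nat.factorial_ne_zero _)
    have ha : (a.factorial : ℚ) ≠ 0 := Nat.cast_ne_zero.2 (Nat.factorial_ne_zero a)
    have hpos : ((a+b+1+N+1 : ℕ) : ℚ) ≠ 0 := by positivity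
    field_simp
    push_cast
    ring

open Finset in
theorem super_catalan_stmt18 (m n j : ℕ) (hm : 1 ≤ m) (hj : 2 * j ≤ n) :
    ∑ k ∈ Finset.Icc (2 * j) n,
        (-1 : ℚ) ^ k * ((2 * m + n - 1).factorial : ℚ) * ((n - 2 * j).factorial : ℚ)
          * ((m + k - j - 1).factorial : ℚ)
          / (((n - k).factorial : ℚ) * ((2 * m + k - 1).factorial : ℚ)
              * ((k - 2 * j).factorial : ℚ) * ((m + n - j - 1).factorial : ℚ))
      = 1 := by
  have key : ∀ N a : ℕ,
      ∑ i ∈ range (N+1), (-1:ℚ)^i * (N.choose i) * ((a+i).factorial : ℚ) / ((a+a+1+i).factorial : ℚ)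
      = ((a.factorial : ℚ) * ((a+N).factorial : ℚ))
        / ((a.factorial : ℚ) * ((a+a+1+N).factorial : ℚ)) := fun N a' => key a' N a'
  set N := n - 2*j with hN
  set a := m + j - 1 with ha
  rw [← Finset.Ico_add_one_right_eq_Icc, Finset.sum_Ico_eq_sum_range]
  have h1 : n + 1 - 2*j = N + 1 := by omega
  rw [h1]
  have hterm : ∀ i ∈ range (N+1),
      (-1 : ℚ) ^ (2*j+i) * ((2 * m + n - 1).factorial : ℚ) * ((n - 2 * j).factorial : ℚ)
          * ((m + (2*j+i) - j - 1).factorial : ℚ)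
          / (((n - (2*j+i)).factorial : ℚ) * ((2 * m + (2*j+i) - 1).factorial : ℚ)
              * (((2*j+i) - 2 * j).factorial : ℚ) * ((m + n - j - 1).factorial : ℚ))
      = ((-1:ℚ)^i * (N.choose i) * ((a+i).factorial : ℚ) / ((a+a+1+i).factorial : ℚ))
          * (((2*m+n-1).factorial : ℚ) / ((m+n-j-1).factorial : ℚ)) := by
    intro i hi
    have hiN : i ≤ N := by simpa using Nat.lt_succ_iff.mp (Finset.mem_range.mp hi)
    have e1 : m + (2*j+i) - j - 1 = a + i := by omega
    have e2 : n - (2*j+i) = N - i := by omega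
    have e3 : 2*m + (2*j+i) - 1 = a+a+1+i := by omega
    have e4 : (2*j+i) - 2*j = i := by omega
    rw [e1, e2, e3, e4]
    have hsgn : (-1:ℚ)^(2*j+i) = (-1:ℚ)^i := by
      rw [pow_add, pow_mul, neg_one_sq, one_pow, one_mul]
    rw [hsgn, Nat.cast_choose ℚ hiN]
    have f1 : ((N-i).factorial : ℚ) ≠ 0 := Nat.cast_ne_zero.2 (Nat.factorial_ne_zero _)
    have f2 : ((a+a+1+i).factorial : ℚ) ≠ 0 := Nat.cast_ne_zero.2 (Nat.factorial_ne_zero _)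
    have f3 : (i.factorial : ℚ) ≠ 0 := Nat.cast_ne_zero.2 (Nat.factorial_ne_zero _)
    have f4 : ((m+n-j-1).factorial : ℚ) ≠ 0 := Nat.cast_ne_zero.2 (Nat.factorial_ne_zero _)
    have f5 : (N.factorial : ℚ) ≠ 0 := Nat.cast_ne_zero.2 (Nat.factorial_ne_zero _)
    field_simp
    ring
  rw [Finset.sum_congr rfl hterm, ← Finset.sum_mul, key N a]
  have e5 : a + N = m+n-j-1 := by omega
  have e6 : a+a+1+N = 2*m+n-1 := by omega
  rw [e5, e6]
  have f1 : ((m+n-j-1).factorial : ℚ) ≠ 0 := Nat.cast_ne_zero.2 (Nat.factorial_ne_zero _)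
  have f2 : ((2*m+n-1).factorial : ℚ) ≠ 0 := Nat.cast_ne_zero.2 (Nat.factorial_ne_zero _)
  have f3 : (a.factorial : ℚ) ≠ 0 := Nat.cast_ne_zero.2 (Nat.factorial_ne_zero _)
  field_simp
end
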